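/- arXiv:2206.01655 — 2 statements merged into one kernel-verified Lean document; each statement's English description precedes it below -/
import Mathlib

section
/- Let A = kQ/I be a cluster-tilted algebra of type A whose quiver contains arrows α_i : i → i+1, γ : i+1 → d_1, β : d_1 → i forming a saturated oriented 3-cycle, together with a tail on vertices d_1, d_2, …, d_t (t ≥ 2; edges between consecutive d_j with arbitrary orientations), where d_1 has valency three in Q and the vertices d_2, …, d_t lie on no oriented 3-cycle of Q. If Δ is an open Frobenius structure on A with Δ(β) = 0 and Δ(γ) = 0, then Δ(e_{d_j}) = 0 for all 1 ≤ j ≤ t. -/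
open scoped TensorProduct

namespace CTA

/-! ### Open Frobenius structures -/

/-- A linear map `Δ : A → A ⊗ A` is an open Frobenius structure if it is a morphism of
`A`-bimodules, i.e. `Δ(xy) = (x ⊗ 1)·Δ(y) = Δ(x)·(1 ⊗ y)`. -/
def IsOpenFrobenius (k : Type) [CommSemiring k] (A : Type) [Ring A] [Algebra k A]
    (Δ : A →ₗ[k] A ⊗[k] A) : Prop :=
  ∀ x y : A, Δ (x * y) = (x ⊗ₜ[k] (1 : A)) * Δ y ∧ Δ (x * y) = Δ x * ((1 : A) ⊗ₜ[k] y)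

/-- The Frobenius space of an algebra: the space of all open Frobenius structures. -/
def FrobSpace (k : Type) [CommSemiring k] (A : Type) [Ring A] [Algebra k A] :
    Submodule k (A →ₗ[k] A ⊗[k] A) where
  carrier := {Δ | IsOpenFrobenius k A Δ}
  zero_mem' := by intro x y; exact ⟨by simp, by simp⟩
  add_mem' := by
    intro Δ₁ Δ₂ h₁ h₂ x y
    refine ⟨?_, ?_⟩
    · simp only [LinearMap.add_apply, (h₁ x y).1, (h₂ x y).1, mul_add]
    · simp only [LinearMap.add_apply, (h₁ x y).2, (h₂ x y).2, add_mul]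
  smul_mem' := by
    intro c Δ h x y
    refine ⟨?_, ?_⟩
    · simp only [LinearMap.smul_apply, (h x y).1, mul_smul_comm]
    · simp only [LinearMap.smul_apply, (h x y).2, smul_mul_assoc]

/-- The Frobenius dimension of an algebra. -/
noncomputable def frobDim (k : Type) [Field k] (A : Type) [Ring A] [Algebra k A] : ℕ :=
  Module.finrank k ↥(FrobSpace k A)

/-! ### Quivers given by an arrow relation, and their path algebras -/

/-- Arrows of the quiver with vertex set `V` given by the relation `Arr`. -/
abbrev Edge (V : Type) (Arr : V → V → Prop) : Type := {p : V × V // Arr p.1 p.2}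

/-- The free algebra on generators: one for each vertex and one for each arrow. -/
abbrev Gen (k : Type) [Field k] (V : Type) (Arr : V → V → Prop) : Type :=
  FreeAlgebra k (V ⊕ Edge V Arr)

/-- Generator corresponding to a vertex (it will become the stationary path `e_v`). -/
noncomputable def genV (k : Type) [Field k] {V : Type} {Arr : V → V → Prop} (v : V) :
    Gen k V Arr :=
  FreeAlgebra.ι k (Sum.inl v)

/-- Generator corresponding to an arrow. -/
noncomputable def genE (k : Type) [Field k] {V : Type} {Arr : V → V → Prop} (a : Edge V Arr) :
    Gen k V Arr :=
  FreeAlgebra.ι k (Sum.inr a)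

/-- Paths in the quiver. -/
inductive Pth {V : Type} (Arr : V → V → Prop) : V → V → Type
  | nil (v : V) : Pth Arr v v
  | cons {u v w : V} (h : Arr u v) (p : Pth Arr v w) : Pth Arr u w

/-- Length of a path. -/
def Pth.length {V : Type} {Arr : V → V → Prop} : ∀ {u v : V}, Pth Arr u v → ℕ
  | _, _, .nil _ => 0
  | _, _, .cons _ p => Pth.length p + 1

/-- The path passes through the vertex `c`. -/
def Pth.Through {V : Type} {Arr : V → V → Prop} (c : V) : ∀ {u v : V}, Pth Arr u v → Prop
  | _, _, .nil v => v = c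
  | u, _, .cons _ p => u = c ∨ Pth.Through c p

/-- The element of the free algebra corresponding to a path. -/
noncomputable def pathGen (k : Type) [Field k] {V : Type} {Arr : V → V → Prop} :
    ∀ {u v : V}, Pth Arr u v → Gen k V Arr
  | _, _, .nil v => genV k v
  | _, _, @Pth.cons _ _ u v _ h p => genE k (⟨(u, v), h⟩ : Edge V Arr) * pathGen k p

/-- The defining relations of the path algebra: the `genV v` are orthogonal idempotents
summing to `1`, and each arrow is compatible with its endpoints. -/
inductive QuiverRel (k : Type) [Field k] (V : Type) [Fintype V] [DecidableEq V]
    (Arr : V → V → Prop) : Gen k V Arr → Gen k V Arr → Prop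
  | idem (u v : V) :
      QuiverRel k V Arr (genV k u * genV k v) (if u = v then genV k u else 0)
  | unit : QuiverRel k V Arr (∑ v : V, genV k v) 1
  | src (a : Edge V Arr) : QuiverRel k V Arr (genV k a.1.1 * genE k a) (genE k a)
  | tgt (a : Edge V Arr) : QuiverRel k V Arr (genE k a * genV k a.1.2) (genE k a)

/-- Relations of the bound quiver algebra `kQ/I`: the path algebra relations together with
the vanishing of every element of the set `R` of relations generating `I`. -/
inductive BoundRel (k : Type) [Field k] (V : Type) [Fintype V] [DecidableEq V]
    (Arr : V → V → Prop) (R : Set (Gen k V Arr)) : Gen k V Arr → Gen k V Arr → Prop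
  | quiver {x y : Gen k V Arr} : QuiverRel k V Arr x y → BoundRel k V Arr R x y
  | rel {x : Gen k V Arr} : x ∈ R → BoundRel k V Arr R x 0

/-- The bound quiver algebra `kQ/I`, where `I` is the two-sided ideal generated by `R`. -/
abbrev Alg (k : Type) [Field k] (V : Type) [Fintype V] [DecidableEq V]
    (Arr : V → V → Prop) (R : Set (Gen k V Arr)) : Type :=
  RingQuot (BoundRel k V Arr R)

/-- The stationary path (idempotent) at a vertex. -/
noncomputable def e (k : Type) [Field k] (V : Type) [Fintype V] [DecidableEq V]
    (Arr : V → V → Prop) (R : Set (Gen k V Arr)) (v : V) : Alg k V Arr R :=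
  RingQuot.mkAlgHom k (BoundRel k V Arr R) (genV k v)

/-- The class of an arrow in the bound quiver algebra. -/
noncomputable def arrEl (k : Type) [Field k] (V : Type) [Fintype V] [DecidableEq V]
    (Arr : V → V → Prop) (R : Set (Gen k V Arr)) (a : Edge V Arr) : Alg k V Arr R :=
  RingQuot.mkAlgHom k (BoundRel k V Arr R) (genE k a)

/-- The class of a path in the bound quiver algebra. -/
noncomputable def pathEl (k : Type) [Field k] (V : Type) [Fintype V] [DecidableEq V]
    (Arr : V → V → Prop) (R : Set (Gen k V Arr)) {u v : V} (p : Pth Arr u v) :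
    Alg k V Arr R :=
  RingQuot.mkAlgHom k (BoundRel k V Arr R) (pathGen k p)

/-! ### Combinatorics of quivers -/

/-- The underlying (simple) graph of the quiver. -/
def graph (V : Type) (Arr : V → V → Prop) : SimpleGraph V := SimpleGraph.fromRel Arr

/-- Valency of a vertex: the number of incident edges in the underlying graph. -/
noncomputable def valency (V : Type) (Arr : V → V → Prop) (v : V) : ℕ :=
  ((graph V Arr).neighborSet v).ncard

/-- `u → v → w → u` is an oriented 3-cycle. -/
def Tri {V : Type} (Arr : V → V → Prop) (u v w : V) : Prop :=
  Arr u v ∧ Arr v w ∧ Arr w u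

/-- The (unoriented) edge between `u` and `v` belongs to some oriented 3-cycle. -/
def EdgeIn3 {V : Type} (Arr : V → V → Prop) (u v : V) : Prop :=
  ∃ w, Tri Arr u v w ∨ Tri Arr v u w

/-- The vertex `v` lies on an oriented 3-cycle. -/
def On3Cycle {V : Type} (Arr : V → V → Prop) (v : V) : Prop := ∃ u w, Tri Arr v u w

/-- The local conditions describing the quivers in the mutation class of type `𝔸`
(Buan–Vatne): no loops and no 2-cycles, all non-trivial cycles of the underlying graph are
3-cycles, every vertex has valency at most four, a valency-four vertex has its four edges
in two oriented 3-cycles, a valency-three vertex has two of its edges in an oriented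
3-cycle and the third in no oriented 3-cycle. -/
structure IsTypeAShape {V : Type} (Arr : V → V → Prop) : Prop where
  irrefl : ∀ v, ¬ Arr v v
  no_two_cycle : ∀ u v, Arr u v → ¬ Arr v u
  cycles_are_3 : ∀ (v : V) (w : (graph V Arr).Walk v v), w.IsCycle → w.length = 3
  valency_le_four : ∀ v, valency V Arr v ≤ 4
  valency_four : ∀ v, valency V Arr v = 4 → ∃ x y z w : V,
    (graph V Arr).neighborSet v = {x, y, z, w} ∧ Tri Arr v x y ∧ Tri Arr v z w
  valency_three : ∀ v, valency V Arr v = 3 → ∃ x y z : V,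
    (graph V Arr).neighborSet v = {x, y, z} ∧ Tri Arr v x y ∧ ¬ EdgeIn3 Arr v z

/-- A quiver is in the mutation class of type `𝔸` iff it moreover is connected. -/
def IsTypeA {V : Type} (Arr : V → V → Prop) : Prop :=
  IsTypeAShape Arr ∧ (graph V Arr).Connected

/-- A connecting vertex: valency one, or valency two and lying on an oriented 3-cycle. -/
def Connecting (V : Type) (Arr : V → V → Prop) (c : V) : Prop :=
  valency V Arr c = 1 ∨ (valency V Arr c = 2 ∧ On3Cycle Arr c)

/-- The set of relations saturating every oriented 3-cycle: all composites of two
consecutive arrows of oriented 3-cycles. -/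
def satSet (k : Type) [Field k] (V : Type) (Arr : V → V → Prop) : Set (Gen k V Arr) :=
  { x | ∃ u v w, ∃ (h₁ : Arr u v) (h₂ : Arr v w), Arr w u ∧
      x = genE k (⟨(u, v), h₁⟩ : Edge V Arr) * genE k (⟨(v, w), h₂⟩ : Edge V Arr) }

/-- Composites of two consecutive arrows of oriented 3-cycles avoiding the set `S`. -/
def satSetAvoid (k : Type) [Field k] (V : Type) (Arr : V → V → Prop) (S : Set V) :
    Set (Gen k V Arr) :=
  { x | ∃ u v w, u ∉ S ∧ v ∉ S ∧ w ∉ S ∧ ∃ (h₁ : Arr u v) (h₂ : Arr v w), Arr w u ∧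
      x = genE k (⟨(u, v), h₁⟩ : Edge V Arr) * genE k (⟨(v, w), h₂⟩ : Edge V Arr) }

/-- The cluster-tilted algebra of type `𝔸` attached to a quiver: every oriented 3-cycle
is saturated. -/
abbrev ctAlg (k : Type) [Field k] (V : Type) [Fintype V] [DecidableEq V]
    (Arr : V → V → Prop) : Type :=
  Alg k V Arr (satSet k V Arr)

/-- A special vertex: valency two, and the two arrows through it compose to zero in the
bound quiver algebra. -/
def Special (k : Type) [Field k] (V : Type) [Fintype V] [DecidableEq V]
    (Arr : V → V → Prop) (R : Set (Gen k V Arr)) (v : V) : Prop :=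
  valency V Arr v = 2 ∧ ∃ u w, ∃ (h₁ : Arr u v) (h₂ : Arr v w),
    arrEl k V Arr R (⟨(u, v), h₁⟩ : Edge V Arr) *
      arrEl k V Arr R (⟨(v, w), h₂⟩ : Edge V Arr) = 0

/-- An admissible endpoint of a basis path: a special vertex, or a vertex of valency one
(a source or sink of valency one). -/
def Good (k : Type) [Field k] (V : Type) [Fintype V] [DecidableEq V]
    (Arr : V → V → Prop) (R : Set (Gen k V Arr)) (v : V) : Prop :=
  Special k V Arr R v ∨ valency V Arr v = 1

/-- The set of basis paths: non-trivial paths, nonzero in the algebra, whose endpoints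
are special vertices or sources/sinks of valency one. -/
def basisPaths (k : Type) [Field k] (V : Type) [Fintype V] [DecidableEq V]
    (Arr : V → V → Prop) (R : Set (Gen k V Arr)) : Set (Σ u v : V, Pth Arr u v) :=
  { p | 0 < p.2.2.length ∧ pathEl k V Arr R p.2.2 ≠ 0 ∧
      Good k V Arr R p.1 ∧ Good k V Arr R p.2.1 }

/-- `ℓ_{→ b}`: the length of the longest path with target `b` not lying in `I`. -/
noncomputable def ellTo (k : Type) [Field k] (V : Type) [Fintype V] [DecidableEq V]
    (Arr : V → V → Prop) (R : Set (Gen k V Arr)) (b : V) : ℕ :=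
  sSup {n | ∃ u, ∃ p : Pth Arr u b, p.length = n ∧ pathEl k V Arr R p ≠ 0}

/-- `ℓ_{← b}`: the length of the longest path with source `b` not lying in `I`. -/
noncomputable def ellFrom (k : Type) [Field k] (V : Type) [Fintype V] [DecidableEq V]
    (Arr : V → V → Prop) (R : Set (Gen k V Arr)) (b : V) : ℕ :=
  sSup {n | ∃ v, ∃ p : Pth Arr b v, p.length = n ∧ pathEl k V Arr R p ≠ 0}

/-- `#_{← z} = dim_k (e_z · A) − 1`: the number of non-trivial paths with source `z`. -/
noncomputable def numFrom (k : Type) [Field k] (V : Type) [Fintype V] [DecidableEq V]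
    (Arr : V → V → Prop) (R : Set (Gen k V Arr)) (z : V) : ℕ :=
  Module.finrank k ↥(LinearMap.range (LinearMap.mulLeft k (e k V Arr R z))) - 1

/-- `#_{→ z} = dim_k (A · e_z) − 1`: the number of non-trivial paths with target `z`. -/
noncomputable def numTo (k : Type) [Field k] (V : Type) [Fintype V] [DecidableEq V]
    (Arr : V → V → Prop) (R : Set (Gen k V Arr)) (z : V) : ℕ :=
  Module.finrank k ↥(LinearMap.range (LinearMap.mulRight k (e k V Arr R z))) - 1

end CTA
set_option linter.unusedSectionVars false
section CTAAux
open CTA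

variable {k : Type} [Field k] {V : Type} [Fintype V] [DecidableEq V] {Arr : V → V → Prop}

/-- `okhead a l`: prepending arrow `a` in front of the chain `l` does not create a
saturated pair. -/
def okhead (a : Edge V Arr) : List (Edge V Arr) → Prop
  | [] => True
  | b :: _ => ¬ Arr b.1.2 a.1.1

/-- all junctions inside `l` and between `l` and `m` are admissible. -/
def glue : List (Edge V Arr) → List (Edge V Arr) → Prop
  | [], _ => True
  | a :: l, m => okhead a (l ++ m) ∧ glue l m

/-- the list of arrows of a path. -/
def toL : ∀ {u v : V}, Pth Arr u v → List (Edge V Arr)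
  | _, _, .nil _ => []
  | _, _, @Pth.cons _ _ u v _ h p => (⟨(u, v), h⟩ : Edge V Arr) :: toL p

lemma tgt_eq_of_toL_nil : ∀ {u v : V} (p : Pth Arr u v), toL p = [] → u = v
  | _, _, .nil _, _ => rfl
  | _, _, .cons _ _, h => by simp [toL] at h

lemma tgt_eq_of_toL_concat : ∀ {u v : V} (p : Pth Arr u v) (l : List (Edge V Arr))
    (b : Edge V Arr), toL p = l ++ [b] → v = b.1.2
  | _, _, .nil _, l, b, h => by simp [toL] at h
  | _, _, .cons h p, [], b, hl => by
      simp [toL] at hl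
      obtain ⟨h1, h2⟩ := hl
      exact (tgt_eq_of_toL_nil p h2).symm.trans (by rw [← h1])
  | _, _, .cons h p, c :: l, b, hl => by
      simp [toL] at hl
      exact tgt_eq_of_toL_concat p l b hl.2

/-- concatenation of paths. -/
def papp : ∀ {u v w : V}, Pth Arr u v → Pth Arr v w → Pth Arr u w
  | _, _, _, .nil _, q => q
  | _, _, _, .cons h p, q => .cons h (papp p q)

lemma toL_papp : ∀ {u v w : V} (p : Pth Arr u v) (q : Pth Arr v w),
    toL (papp p q) = toL p ++ toL q
  | _, _, _, .nil _, q => rfl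
  | _, _, _, .cons h p, q => by simp [papp, toL, toL_papp p q]

end CTAAux
section CTAAux2
open CTA

variable (k : Type) [Field k] (V : Type) [Fintype V] [DecidableEq V] (Arr : V → V → Prop)

/-- abbreviation for the cluster tilted algebra quotient map. -/
noncomputable def mkA : Gen k V Arr →ₐ[k] ctAlg k V Arr :=
  RingQuot.mkAlgHom k (BoundRel k V Arr (satSet k V Arr))

variable {V Arr}

noncomputable def ee (v : V) : ctAlg k V Arr := mkA k V Arr (genV k v)
noncomputable def ar (a : Edge V Arr) : ctAlg k V Arr := mkA k V Arr (genE k a)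
noncomputable def pe {u v : V} (p : Pth Arr u v) : ctAlg k V Arr :=
  mkA k V Arr (pathGen k p)

lemma ee_def (v : V) : ee k v = e k V Arr (satSet k V Arr) v := rfl
lemma ar_def (a : Edge V Arr) : ar k a = arrEl k V Arr (satSet k V Arr) a := rfl

lemma ee_mul_ee (u v : V) : ee k u * ee k v = if u = v then (ee k u : ctAlg k V Arr) else 0 := by
  have := RingQuot.mkAlgHom_rel k
    (BoundRel.quiver (R := satSet k V Arr) (QuiverRel.idem (k := k) (Arr := Arr) u v))
  rw [map_mul] at this
  unfold ee mkA
  rw [this, apply_ite (RingQuot.mkAlgHom k (BoundRel k V Arr (satSet k V Arr))), map_zero]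

lemma ee_mul_ee_self (u : V) : ee k u * ee k u = (ee k u : ctAlg k V Arr) := by
  simp [ee_mul_ee]

lemma ee_mul_ee_ne {u v : V} (h : u ≠ v) : ee k u * ee k v = (0 : ctAlg k V Arr) := by
  simp [ee_mul_ee, h]

lemma one_eq_sum_ee : (1 : ctAlg k V Arr) = ∑ v : V, ee k v := by
  have := RingQuot.mkAlgHom_rel k (BoundRel.quiver (R := satSet k V Arr) (QuiverRel.unit (k := k) (Arr := Arr)))
  rw [map_sum] at this
  rw [← map_one (mkA k V Arr)]
  exact this.symm

lemma ee_mul_ar (a : Edge V Arr) : ee k a.1.1 * ar k a = (ar k a : ctAlg k V Arr) := by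
  have := RingQuot.mkAlgHom_rel k (BoundRel.quiver (R := satSet k V Arr) (QuiverRel.src (k := k) (Arr := Arr) a))
  rw [map_mul] at this; exact this

lemma ar_mul_ee (a : Edge V Arr) : ar k a * ee k a.1.2 = (ar k a : ctAlg k V Arr) := by
  have := RingQuot.mkAlgHom_rel k (BoundRel.quiver (R := satSet k V Arr) (QuiverRel.tgt (k := k) (Arr := Arr) a))
  rw [map_mul] at this; exact this

lemma sat_zero {u v w : V} (h1 : Arr u v) (h2 : Arr v w) (h3 : Arr w u) :
    ar k (⟨(u, v), h1⟩ : Edge V Arr) * ar k (⟨(v, w), h2⟩ : Edge V Arr) = 0 := by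
  have := RingQuot.mkAlgHom_rel k
    (BoundRel.rel (k := k) (V := V) (Arr := Arr) (R := satSet k V Arr)
      (x := genE k (⟨(u, v), h1⟩ : Edge V Arr) * genE k (⟨(v, w), h2⟩ : Edge V Arr))
      ⟨u, v, w, h1, h2, h3, rfl⟩)
  rw [map_mul, map_zero] at this; exact this

lemma pe_nil (v : V) : pe k (Pth.nil (Arr := Arr) v) = ee k v := rfl

lemma pe_cons {u v w : V} (h : Arr u v) (p : Pth Arr v w) :
    pe k (Pth.cons h p) = ar k (⟨(u, v), h⟩ : Edge V Arr) * pe k p := by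
  rw [pe, pathGen, map_mul]; rfl

lemma ee_mul_pe {u v : V} (p : Pth Arr u v) : ee k u * pe k p = pe k p := by
  induction p with
  | nil v => exact ee_mul_ee_self k v
  | @cons u v w h p ih =>
      rw [pe_cons, ← mul_assoc]
      exact congrArg (fun z => z * pe k p) (ee_mul_ar k ⟨(u, v), h⟩)

lemma pe_mul_ee {u v : V} (p : Pth Arr u v) : pe k p * ee k v = pe k p := by
  induction p with
  | nil v => exact ee_mul_ee_self k v
  | cons h p ih => rw [pe_cons, mul_assoc, ih]

lemma pe_papp {u v w : V} (p : Pth Arr u v) (q : Pth Arr v w) :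
    pe k (papp p q) = pe k p * pe k q := by
  induction p with
  | nil v => rw [papp, pe_nil, ee_mul_pe]
  | cons h p ih => rw [papp, pe_cons, pe_cons, ih, mul_assoc]

lemma pe_mul_pe_ne {u v v' w : V} (p : Pth Arr u v) (q : Pth Arr v' w) (h : v ≠ v') :
    pe k p * pe k q = 0 := by
  rw [← pe_mul_ee k p, ← ee_mul_pe k q, mul_assoc, ← mul_assoc (ee k v),
    ee_mul_ee_ne k h, zero_mul, mul_zero]

lemma pe_eq_zero_of_not_glue {u v : V} (p : Pth Arr u v) (h : ¬ glue (toL p) []) :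
    pe k p = 0 := by
  induction p with
  | nil v => exact absurd trivial h
  | cons hh p ih =>
      rw [pe_cons]
      by_cases hg : glue (toL p) []
      · -- head junction must be bad
        have hbad : ¬ okhead (Arr := Arr) ⟨(_, _), hh⟩ (toL p ++ []) := by
          intro hok; exact h ⟨hok, hg⟩
        rw [List.append_nil] at hbad
        match p, hbad with
        | .nil _, hbad => exact absurd trivial hbad
        | .cons h2 p', hbad =>
            have h3 : Arr _ _ := not_not.mp hbad
            rw [pe_cons, ← mul_assoc, sat_zero k hh h2 h3, zero_mul]
      · rw [ih hg, mul_zero]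

/-- The set of classes of admissible paths. -/
def PB : Set (ctAlg k V Arr) :=
  {x | ∃ (u v : V) (p : Pth Arr u v), glue (toL p) [] ∧ x = pe k p}

lemma one_mem_span_PB : (1 : ctAlg k V Arr) ∈ Submodule.span k (PB k (Arr := Arr)) := by
  rw [one_eq_sum_ee k]
  exact Submodule.sum_mem _ fun v _ => Submodule.subset_span ⟨v, v, Pth.nil v, trivial, rfl⟩

lemma mul_mem_span_PB {x y : ctAlg k V Arr}
    (hx : x ∈ Submodule.span k (PB k (Arr := Arr)))
    (hy : y ∈ Submodule.span k (PB k (Arr := Arr))) :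
    x * y ∈ Submodule.span k (PB k (Arr := Arr)) := by
  induction hx using Submodule.span_induction with
  | mem a ha =>
      induction hy using Submodule.span_induction with
      | mem b hb =>
          obtain ⟨u, v, p, hp, rfl⟩ := ha
          obtain ⟨u', v', q, hq, rfl⟩ := hb
          by_cases hvv : v = u'
          · subst hvv
            by_cases hgl : glue (toL (papp p q)) []
            · exact Submodule.subset_span ⟨u, v', papp p q, hgl, (pe_papp k p q).symm⟩
            · rw [← pe_papp k p q, pe_eq_zero_of_not_glue k _ hgl]
              exact Submodule.zero_mem _
          · rw [pe_mul_pe_ne k p q hvv]; exact Submodule.zero_mem _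
      | zero => rw [mul_zero]; exact Submodule.zero_mem _
      | add b c _ _ hb hc => rw [mul_add]; exact Submodule.add_mem _ hb hc
      | smul r b _ hb => rw [mul_smul_comm]; exact Submodule.smul_mem _ r hb
  | zero => rw [zero_mul]; exact Submodule.zero_mem _
  | add a b _ _ ha hb => rw [add_mul]; exact Submodule.add_mem _ ha hb
  | smul r a _ ha => rw [smul_mul_assoc]; exact Submodule.smul_mem _ r ha

lemma span_PB_eq_top : Submodule.span k (PB k (Arr := Arr)) = ⊤ := by
  rw [eq_top_iff]
  rintro x -
  obtain ⟨y, rfl⟩ := RingQuot.mkAlgHom_surjective k (BoundRel k V Arr (satSet k V Arr)) x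
  show mkA k V Arr y ∈ _
  induction y using FreeAlgebra.induction with
  | grade0 r =>
      rw [AlgHom.commutes, Algebra.algebraMap_eq_smul_one]
      exact Submodule.smul_mem _ r (one_mem_span_PB k)
  | grade1 g =>
      match g with
      | Sum.inl v =>
          exact Submodule.subset_span ⟨v, v, Pth.nil v, trivial, rfl⟩
      | Sum.inr a =>
          refine Submodule.subset_span ⟨a.1.1, a.1.2, Pth.cons a.2 (Pth.nil a.1.2),
            ⟨trivial, trivial⟩, ?_⟩
          have ha : (⟨((a : V × V).1, (a : V × V).2), a.2⟩ : Edge V Arr) = a :=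
            Subtype.ext rfl
          show mkA k V Arr (genE k a) = _
          rw [pe_cons, pe_nil, ha, ar_mul_ee]
          rfl
  | mul x y hx hy => rw [map_mul]; exact mul_mem_span_PB k hx hy
  | add x y hx hy => rw [map_add]; exact Submodule.add_mem _ hx hy

end CTAAux2
section CTARep
open CTA

variable (k : Type) [Field k] {V : Type} [Fintype V] [DecidableEq V] {Arr : V → V → Prop}

/-- index type for the representation space: a source vertex and a list of arrows. -/
abbrev Idx (V : Type) (Arr : V → V → Prop) : Type := V × List (Edge V Arr)

open scoped Classical in
/-- projection onto the basis vectors with first component `v`. -/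
noncomputable def proj (v : V) : (Idx V Arr →₀ k) →ₗ[k] (Idx V Arr →₀ k) :=
  Finsupp.lsum k fun ι => if ι.1 = v then Finsupp.lsingle ι else 0

open scoped Classical in
/-- prepend the arrow `a`, if admissible. -/
noncomputable def prep (a : Edge V Arr) : (Idx V Arr →₀ k) →ₗ[k] (Idx V Arr →₀ k) :=
  Finsupp.lsum k fun ι =>
    if ι.1 = a.1.2 ∧ okhead a ι.2 then Finsupp.lsingle (a.1.1, a :: ι.2) else 0

open scoped Classical in
lemma proj_single (v : V) (ι : Idx V Arr) (c : k) :
    proj k v (Finsupp.single ι c) = if ι.1 = v then Finsupp.single ι c else 0 := by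
  rw [proj, Finsupp.lsum_single]
  split_ifs <;> simp

open scoped Classical in
lemma prep_single (a : Edge V Arr) (ι : Idx V Arr) (c : k) :
    prep k a (Finsupp.single ι c) =
      if ι.1 = a.1.2 ∧ okhead a ι.2 then Finsupp.single ((a.1.1, a :: ι.2) : Idx V Arr) c
      else 0 := by
  rw [prep, Finsupp.lsum_single]
  split_ifs <;> simp

open scoped Classical in
lemma proj_coeff (v : V) (w : Idx V Arr →₀ k) (t : Idx V Arr) :
    proj k v w t = if t.1 = v then w t else 0 := by
  induction w using Finsupp.induction_linear with
  | zero => simp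
  | add f g hf hg => rw [map_add, Finsupp.add_apply, hf, hg]; split_ifs <;> simp
  | single ι c =>
      rw [proj_single]
      rcases eq_or_ne ι.1 v with h | h
      · rw [if_pos h]
        rcases eq_or_ne ι t with rfl | hit
        · simp [h]
        · rw [Finsupp.single_apply, if_neg hit]
          split_ifs <;> simp [Finsupp.single_apply, hit]
      · rw [if_neg h, Finsupp.zero_apply]
        rcases eq_or_ne ι t with rfl | hit
        · simp [h]
        · rw [Finsupp.single_apply, if_neg hit]; simp

open scoped Classical in
lemma prep_coeff_match (a : Edge V Arr) (w : Idx V Arr →₀ k) (l' : List (Edge V Arr))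
    (hok : okhead a l') :
    prep k a w ((a.1.1, a :: l') : Idx V Arr) = w ((a.1.2, l') : Idx V Arr) := by
  induction w using Finsupp.induction_linear with
  | zero => simp
  | add f g hf hg => rw [map_add, Finsupp.add_apply, hf, hg, Finsupp.add_apply]
  | single ι c =>
      rw [prep_single]
      rcases eq_or_ne ι ((a.1.2, l') : Idx V Arr) with rfl | hne
      · rw [if_pos ⟨rfl, hok⟩, Finsupp.single_apply, if_pos rfl,
          Finsupp.single_apply, if_pos rfl]
      · have : Finsupp.single ι c ((a.1.2, l') : Idx V Arr) = 0 := by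
          rw [Finsupp.single_apply, if_neg hne]
        rw [this]
        split_ifs with hc
        · rw [Finsupp.single_apply, if_neg]
          intro hcontra
          apply hne
          have h2 : a :: ι.2 = a :: l' := (Prod.ext_iff.mp hcontra).2
          have h1 : ι.2 = l' := by injection h2
          exact Prod.ext hc.1 h1
        · simp

open scoped Classical in
lemma prep_coeff_nomatch (a : Edge V Arr) (w : Idx V Arr →₀ k) (t : Idx V Arr)
    (h : ∀ l', t ≠ ((a.1.1, a :: l') : Idx V Arr)) :
    prep k a w t = 0 := by
  induction w using Finsupp.induction_linear with
  | zero => simp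
  | add f g hf hg => rw [map_add, Finsupp.add_apply, hf, hg, add_zero]
  | single ι c =>
      rw [prep_single]
      split_ifs with hc
      · rw [Finsupp.single_apply, if_neg (fun hcontra => h ι.2 hcontra.symm)]
      · simp

open scoped Classical in
lemma prep_coeff_bad (a : Edge V Arr) (w : Idx V Arr →₀ k) (l' : List (Edge V Arr))
    (hok : ¬ okhead a l') :
    prep k a w ((a.1.1, a :: l') : Idx V Arr) = 0 := by
  induction w using Finsupp.induction_linear with
  | zero => simp
  | add f g hf hg => rw [map_add, Finsupp.add_apply, hf, hg, add_zero]
  | single ι c =>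
      rw [prep_single]
      split_ifs with hc
      · rw [Finsupp.single_apply, if_neg]
        intro hcon
        have h2 : ι.2 = l' := by
          have := (Prod.ext_iff.mp hcon).2
          injection this
        exact hok (h2 ▸ hc.2)
      · simp

/-- the representation of the free algebra. -/
noncomputable def Phi : Gen k V Arr →ₐ[k] Module.End k (Idx V Arr →₀ k) :=
  FreeAlgebra.lift k (Sum.elim (fun v => proj k v) (fun a => prep k a))

lemma Phi_genV (v : V) : Phi k (genV k v) = proj k (Arr := Arr) v := by
  rw [Phi, genV, FreeAlgebra.lift_ι_apply]; rfl

lemma Phi_genE (a : Edge V Arr) : Phi k (genE k a) = prep k a := by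
  rw [Phi, genE, FreeAlgebra.lift_ι_apply]; rfl

lemma PhiRel : ∀ x y : Gen k V Arr, BoundRel k V Arr (satSet k V Arr) x y →
    Phi k x = Phi k y := by
  intro x y h
  cases h with
  | quiver hq =>
      cases hq with
      | idem u v =>
          rw [map_mul, Phi_genV, Phi_genV]
          rw [apply_ite (Phi k), Phi_genV, map_zero]
          apply Finsupp.lhom_ext
          intro ι c
          rw [Module.End.mul_apply, proj_single]
          by_cases h1 : ι.1 = v
          · rw [if_pos h1, proj_single]
            by_cases h2 : u = v
            · subst h2; rw [if_pos rfl, proj_single, if_pos h1]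
            · rw [if_neg (fun hh : ι.1 = u => h2 ((hh.symm.trans h1))),
                if_neg h2, LinearMap.zero_apply]
          · rw [if_neg h1, map_zero]
            by_cases h2 : u = v
            · rw [if_pos h2, proj_single, if_neg (h2 ▸ h1)]
            · rw [if_neg h2, LinearMap.zero_apply]
      | unit =>
          rw [map_sum, map_one]
          apply Finsupp.lhom_ext
          intro ι c
          simp only [LinearMap.coe_sum, Finset.sum_apply, Phi_genV, proj_single,
            Module.End.one_apply]
          rw [Finset.sum_ite_eq (Finset.univ : Finset V) ι.1 fun _ => Finsupp.single ι c]
          simp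
      | src a =>
          rw [map_mul, Phi_genV, Phi_genE]
          apply Finsupp.lhom_ext
          intro ι c
          rw [Module.End.mul_apply, prep_single]
          split_ifs with h1
          · rw [proj_single, if_pos rfl]
          · simp
      | tgt a =>
          rw [map_mul, Phi_genV, Phi_genE]
          apply Finsupp.lhom_ext
          intro ι c
          rw [Module.End.mul_apply, proj_single]
          split_ifs with h1
          · rfl
          · rw [prep_single, if_neg (fun hc => h1 hc.1), map_zero]
  | rel hx =>
      obtain ⟨u, v, w, h1, h2, h3, rfl⟩ := hx
      rw [map_mul, Phi_genE, Phi_genE, map_zero]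
      apply Finsupp.lhom_ext
      intro ι c
      rw [Module.End.mul_apply, prep_single]
      split_ifs with hc
      · rw [prep_single, if_neg, LinearMap.zero_apply]
        rintro ⟨-, hbad⟩
        exact hbad h3
      · simp

/-- the representation of the cluster-tilted algebra. -/
noncomputable def PhiBar : ctAlg k V Arr →ₐ[k] Module.End k (Idx V Arr →₀ k) :=
  RingQuot.liftAlgHom k ⟨Phi k, PhiRel k⟩

lemma PhiBar_mkA (x : Gen k V Arr) : PhiBar k (mkA k V Arr x) = Phi k x :=
  RingQuot.liftAlgHom_mkAlgHom_apply k _ _ _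

/-- the coefficient functionals. -/
noncomputable def Gf (t s : Idx V Arr) : ctAlg k V Arr →ₗ[k] k :=
  Finsupp.lapply t ∘ₗ ((PhiBar k (Arr := Arr)).toLinearMap.flip (Finsupp.single s 1))

lemma Gf_apply (t s : Idx V Arr) (x : ctAlg k V Arr) :
    Gf k t s x = PhiBar k x (Finsupp.single s 1) t := rfl

end CTARep
section CTAEval
open CTA

variable (k : Type) [Field k] {V : Type} [Fintype V] [DecidableEq V] {Arr : V → V → Prop}

open scoped Classical in
lemma Phi_pathGen_single : ∀ {u v : V} (p : Pth Arr u v) (s : Idx V Arr),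
    Phi k (pathGen k p) (Finsupp.single s (1 : k)) =
      if v = s.1 ∧ glue (toL p) s.2 then
        Finsupp.single ((u, toL p ++ s.2) : Idx V Arr) (1 : k) else 0
  | _, _, .nil v, s => by
      rw [pathGen, Phi_genV, proj_single]
      simp only [toL, glue, List.nil_append]
      by_cases h : s.1 = v
      · have hs : s = ((v, s.2) : Idx V Arr) := Prod.ext h rfl
        rw [if_pos h, if_pos ⟨h.symm, trivial⟩, ← hs]
      · rw [if_neg h, if_neg (fun hc => h hc.1.symm)]
  | _, _, @Pth.cons _ _ u m w hh p, s => by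
      rw [pathGen, map_mul, Module.End.mul_apply, Phi_pathGen_single p s, Phi_genE]
      simp only [toL, glue, List.cons_append]
      by_cases h1 : w = s.1
      · by_cases h2 : glue (toL p) s.2
        · rw [if_pos ⟨h1, h2⟩, prep_single]
          by_cases h3 : okhead (⟨(u, m), hh⟩ : Edge V Arr) (toL p ++ s.2)
          · rw [if_pos ⟨rfl, h3⟩, if_pos ⟨h1, h3, h2⟩]
          · rw [if_neg (fun hc => h3 hc.2), if_neg (fun hc => h3 hc.2.1)]
        · rw [if_neg (fun hc => h2 hc.2), map_zero,
            if_neg (fun hc : _ ∧ _ ∧ _ => h2 hc.2.2)]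
      · rw [if_neg (fun hc => h1 hc.1), map_zero, if_neg (fun hc : _ ∧ _ ∧ _ => h1 hc.1)]

open scoped Classical in
lemma Gf_pe {u v : V} (p : Pth Arr u v) (t s : Idx V Arr) :
    Gf k t s (pe k p) =
      if v = s.1 ∧ glue (toL p) s.2 ∧ t = ((u, toL p ++ s.2) : Idx V Arr) then (1 : k)
      else 0 := by
  rw [Gf_apply, pe, PhiBar_mkA, Phi_pathGen_single]
  by_cases h1 : v = s.1 ∧ glue (toL p) s.2
  · rw [if_pos h1, Finsupp.single_apply]
    by_cases h2 : ((u, toL p ++ s.2) : Idx V Arr) = t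
    · rw [if_pos h2, if_pos ⟨h1.1, h1.2, h2.symm⟩]
    · rw [if_neg h2, if_neg (fun hc : _ ∧ _ ∧ _ => h2 hc.2.2.symm)]
  · rw [if_neg h1, Finsupp.zero_apply, if_neg (fun hc : _ ∧ _ ∧ _ => h1 ⟨hc.1, hc.2.1⟩)]

lemma Gf_ee_left (t s : Idx V Arr) (v : V) (x : ctAlg k V Arr) :
    Gf k t s (ee k v * x) =
      if t.1 = v then Gf k t s x else 0 := by
  rw [Gf_apply, map_mul, Module.End.mul_apply, ee, PhiBar_mkA, Phi_genV, proj_coeff]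
  split_ifs <;> rfl

lemma Gf_ar_left_match (a : Edge V Arr) (l' : List (Edge V Arr)) (hok : okhead a l')
    (s : Idx V Arr) (x : ctAlg k V Arr) :
    Gf k ((a.1.1, a :: l') : Idx V Arr) s (ar k a * x) = Gf k ((a.1.2, l') : Idx V Arr) s x := by
  rw [Gf_apply, map_mul, Module.End.mul_apply, ar, PhiBar_mkA, Phi_genE,
    prep_coeff_match k a _ l' hok]
  rfl

lemma Gf_ar_left_bad (a : Edge V Arr) (l' : List (Edge V Arr)) (hok : ¬ okhead a l')
    (s : Idx V Arr) (x : ctAlg k V Arr) :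
    Gf k ((a.1.1, a :: l') : Idx V Arr) s (ar k a * x) = 0 := by
  rw [Gf_apply, map_mul, Module.End.mul_apply, ar, PhiBar_mkA, Phi_genE,
    prep_coeff_bad k a _ l' hok]

lemma Gf_ar_left_nomatch (a : Edge V Arr) (t : Idx V Arr)
    (h : ∀ l', t ≠ ((a.1.1, a :: l') : Idx V Arr)) (s : Idx V Arr) (x : ctAlg k V Arr) :
    Gf k t s (ar k a * x) = 0 := by
  rw [Gf_apply, map_mul, Module.End.mul_apply, ar, PhiBar_mkA, Phi_genE,
    prep_coeff_nomatch k a _ t h]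

lemma Gf_ee_right (t s : Idx V Arr) (v : V) (x : ctAlg k V Arr) :
    Gf k t s (x * ee k v) = if s.1 = v then Gf k t s x else 0 := by
  rw [Gf_apply, map_mul, Module.End.mul_apply, ee, PhiBar_mkA, Phi_genV, proj_single]
  split_ifs
  · rfl
  · rw [map_zero, Finsupp.zero_apply]

lemma Gf_ar_right_match (t s : Idx V Arr) (a : Edge V Arr) (h1 : s.1 = a.1.2)
    (h2 : okhead a s.2) (x : ctAlg k V Arr) :
    Gf k t s (x * ar k a) = Gf k t ((a.1.1, a :: s.2) : Idx V Arr) x := by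
  rw [Gf_apply, map_mul, Module.End.mul_apply, ar, PhiBar_mkA, Phi_genE, prep_single,
    if_pos ⟨h1, h2⟩]
  rfl

lemma Gf_ar_right_nomatch (t s : Idx V Arr) (a : Edge V Arr)
    (h : ¬ (s.1 = a.1.2 ∧ okhead a s.2)) (x : ctAlg k V Arr) :
    Gf k t s (x * ar k a) = 0 := by
  rw [Gf_apply, map_mul, Module.End.mul_apply, ar, PhiBar_mkA, Phi_genE, prep_single,
    if_neg h, map_zero, Finsupp.zero_apply]

/-- pairing a tensor against two coefficient functionals. -/
noncomputable def TT (φ ψ : ctAlg k V Arr →ₗ[k] k) :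
    ctAlg k V Arr ⊗[k] ctAlg k V Arr →ₗ[k] k :=
  (TensorProduct.lid k k).toLinearMap ∘ₗ TensorProduct.map φ ψ

lemma TT_tmul (φ ψ : ctAlg k V Arr →ₗ[k] k) (x y : ctAlg k V Arr) :
    TT k φ ψ (x ⊗ₜ[k] y) = φ x * ψ y := by
  simp [TT, TensorProduct.lid_tmul, smul_eq_mul]

lemma TT_zero_left (ψ : ctAlg k V Arr →ₗ[k] k) (m : ctAlg k V Arr ⊗[k] ctAlg k V Arr) :
    TT k 0 ψ m = 0 := by
  simp [TT]

lemma TT_zero_right (φ : ctAlg k V Arr →ₗ[k] k) (m : ctAlg k V Arr ⊗[k] ctAlg k V Arr) :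
    TT k φ 0 m = 0 := by
  simp [TT]

lemma TT_mulLeft (φ ψ : ctAlg k V Arr →ₗ[k] k) (x : ctAlg k V Arr)
    (m : ctAlg k V Arr ⊗[k] ctAlg k V Arr) :
    TT k φ ψ ((x ⊗ₜ[k] (1 : ctAlg k V Arr)) * m) =
      TT k (φ ∘ₗ LinearMap.mulLeft k x) ψ m := by
  induction m using TensorProduct.induction_on with
  | zero => simp
  | tmul a b =>
      rw [Algebra.TensorProduct.tmul_mul_tmul, one_mul, TT_tmul, TT_tmul]
      rfl
  | add a b ha hb => rw [mul_add, map_add, map_add, ha, hb]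

lemma TT_mulRight (φ ψ : ctAlg k V Arr →ₗ[k] k) (x : ctAlg k V Arr)
    (m : ctAlg k V Arr ⊗[k] ctAlg k V Arr) :
    TT k φ ψ (m * ((1 : ctAlg k V Arr) ⊗ₜ[k] x)) =
      TT k φ (ψ ∘ₗ LinearMap.mulRight k x) m := by
  induction m using TensorProduct.induction_on with
  | zero => simp
  | tmul a b =>
      rw [Algebra.TensorProduct.tmul_mul_tmul, mul_one, TT_tmul, TT_tmul]
      rfl
  | add a b ha hb => rw [add_mul, map_add, map_add, ha, hb]

lemma toL_determines : ∀ {u v v' : V} (p : Pth Arr u v) (p' : Pth Arr u v'),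
    toL p = toL p' → v = v' ∧ pe k p = pe k p'
  | _, _, _, .nil _, .nil _, _ => ⟨rfl, rfl⟩
  | _, _, _, .nil _, .cons _ _, h => by simp [toL] at h
  | _, _, _, .cons _ _, .nil _, h => by simp [toL] at h
  | _, _, _, @Pth.cons _ _ u m w h1 p1, @Pth.cons _ _ _ m' w' h1' p1', hl => by
      rw [toL, toL] at hl
      have he : (⟨(u, m), h1⟩ : Edge V Arr) = ⟨(u, m'), h1'⟩ := (List.cons.injEq _ _ _ _ ▸ hl).1
      have ht : toL p1 = toL p1' := (List.cons.injEq _ _ _ _ ▸ hl).2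
      have hm : m = m' := by
        have := congrArg (fun e : Edge V Arr => (e : V × V).2) he
        exact this
      subst hm
      obtain ⟨hw, hpe⟩ := toL_determines p1 p1' ht
      exact ⟨hw, by rw [pe_cons, pe_cons, hpe]⟩

/-- the spanning set of pure tensors of admissible path classes. -/
def Pairs : Set (ctAlg k V Arr ⊗[k] ctAlg k V Arr) :=
  {m | ∃ x ∈ PB k (Arr := Arr), ∃ y ∈ PB k (Arr := Arr), m = x ⊗ₜ[k] y}

lemma tmul_mem_span_pairs (x y : ctAlg k V Arr) :
    x ⊗ₜ[k] y ∈ Submodule.span k (Pairs k (Arr := Arr)) := by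
  have hx : x ∈ Submodule.span k (PB k (Arr := Arr)) := by
    rw [span_PB_eq_top]; trivial
  have hy : y ∈ Submodule.span k (PB k (Arr := Arr)) := by
    rw [span_PB_eq_top]; trivial
  induction hx using Submodule.span_induction with
  | mem a ha =>
      induction hy using Submodule.span_induction with
      | mem b hb => exact Submodule.subset_span ⟨a, ha, b, hb, rfl⟩
      | zero => rw [TensorProduct.tmul_zero]; exact Submodule.zero_mem _
      | add b c _ _ hb hc =>
          rw [TensorProduct.tmul_add]; exact Submodule.add_mem _ hb hc
      | smul r b _ hb =>
          rw [TensorProduct.tmul_smul]; exact Submodule.smul_mem _ r hb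
  | zero => rw [TensorProduct.zero_tmul]; exact Submodule.zero_mem _
  | add a b _ _ ha hb => rw [TensorProduct.add_tmul]; exact Submodule.add_mem _ ha hb
  | smul r a _ ha =>
      rw [TensorProduct.smul_tmul, TensorProduct.tmul_smul]
      exact Submodule.smul_mem _ r ha

lemma mem_span_pairs (m : ctAlg k V Arr ⊗[k] ctAlg k V Arr) :
    m ∈ Submodule.span k (Pairs k (Arr := Arr)) := by
  have h2 : m ∈ Submodule.span k {t : ctAlg k V Arr ⊗[k] ctAlg k V Arr | ∃ a b, a ⊗ₜ b = t} := by
    rw [TensorProduct.span_tmul_eq_top]; trivial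
  induction h2 using Submodule.span_induction with
  | mem a ha => obtain ⟨a1, a2, rfl⟩ := ha; exact tmul_mem_span_pairs k a1 a2
  | zero => exact Submodule.zero_mem _
  | add a b _ _ ha hb => exact Submodule.add_mem _ ha hb
  | smul r a _ ha => exact Submodule.smul_mem _ r ha

open scoped Classical in
lemma zero_of_coords (m : ctAlg k V Arr ⊗[k] ctAlg k V Arr)
    (h : ∀ (u v u' v' : V) (p : Pth Arr u v) (q : Pth Arr u' v'),
      glue (toL p) [] → glue (toL q) [] →
      TT k (Gf k ((u, toL p) : Idx V Arr) ((v, []) : Idx V Arr))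
        (Gf k ((u', toL q) : Idx V Arr) ((v', []) : Idx V Arr)) m = 0) :
    m = 0 := by
  have hm : m ∈ Submodule.span k (Pairs k (Arr := Arr)) := mem_span_pairs k m
  rw [Submodule.mem_span_set] at hm
  obtain ⟨c, hsupp, rfl⟩ := hm
  have hc : ∀ z ∈ c.support, c z = 0 := by
    intro z hz
    obtain ⟨x, ⟨u, v, p, hp, rfl⟩, y, ⟨u', v', q, hq, rfl⟩, rfl⟩ := hsupp hz
    have h0 := h u v u' v' p q hp hq
    set F := TT k (Gf k ((u, toL p) : Idx V Arr) ((v, []) : Idx V Arr))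
        (Gf k ((u', toL q) : Idx V Arr) ((v', []) : Idx V Arr)) with hF
    rw [map_finsuppSum] at h0
    have hself : F (pe k p ⊗ₜ[k] pe k q) = 1 := by
      rw [hF, TT_tmul, Gf_pe, Gf_pe, if_pos ⟨rfl, hp, by simp⟩, if_pos ⟨rfl, hq, by simp⟩,
        one_mul]
    have hother : ∀ z' ∈ c.support, z' ≠ pe k p ⊗ₜ[k] pe k q → c z' * F z' = 0 := by
      intro z' hz' hne
      obtain ⟨x', ⟨u2, v2, p2, hp2, rfl⟩, y', ⟨u3, v3, q2, hq2, rfl⟩, rfl⟩ := hsupp hz'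
      rw [hF, TT_tmul, Gf_pe, Gf_pe]
      by_cases hc1 : v2 = v ∧ glue (toL p2) [] ∧
          ((u2, toL p2 ++ []) : Idx V Arr) = ((u, toL p) : Idx V Arr)
      · by_cases hc2 : v3 = v' ∧ glue (toL q2) [] ∧
            ((u3, toL q2 ++ []) : Idx V Arr) = ((u', toL q) : Idx V Arr)
        · exfalso
          apply hne
          obtain ⟨hv2, -, hidx⟩ := hc1
          obtain ⟨hv3, -, hidx2⟩ := hc2
          have hu2 : u2 = u := (Prod.ext_iff.mp hidx).1
          have hl2 : toL p2 = toL p := by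
            have := (Prod.ext_iff.mp hidx).2; rwa [List.append_nil] at this
          have hu3 : u3 = u' := (Prod.ext_iff.mp hidx2).1
          have hl3 : toL q2 = toL q := by
            have := (Prod.ext_iff.mp hidx2).2; rwa [List.append_nil] at this
          subst hu2; subst hu3
          have e1 := (toL_determines k p2 p hl2).2
          have e2 := (toL_determines k q2 q hl3).2
          rw [e1, e2]
        · rw [if_neg (fun hcc : _ ∧ _ ∧ _ => hc2 ⟨hcc.1, hcc.2.1, by
            rw [← hcc.2.2]⟩), mul_zero, mul_zero]
      · rw [if_neg (fun hcc : _ ∧ _ ∧ _ => hc1 ⟨hcc.1, hcc.2.1, by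
          rw [← hcc.2.2]⟩), zero_mul, mul_zero]
    rw [Finsupp.sum] at h0
    simp only [map_smul, smul_eq_mul] at h0
    rw [Finset.sum_eq_single (pe k p ⊗ₜ[k] pe k q)] at h0
    · rw [hself, mul_one] at h0
      exact h0
    · intro z' hz' hne
      exact hother z' hz' hne
    · intro hnotin
      exact absurd hz hnotin
  rw [Finsupp.sum]
  apply Finset.sum_eq_zero
  intro z hz
  rw [hc z hz, zero_smul]

end CTAEval
section CTAComb
open CTA

variable {V : Type} [Fintype V] [DecidableEq V] {Arr : V → V → Prop}

lemma mem_nbr_left (hirr : ∀ w, ¬ Arr w w) {u v : V} (h : Arr u v) :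
    v ∈ (graph V Arr).neighborSet u := by
  have hne : u ≠ v := fun he => hirr u (by rw [he] at h ⊢; exact h)
  rw [SimpleGraph.mem_neighborSet]
  show (SimpleGraph.fromRel Arr).Adj u v
  rw [SimpleGraph.fromRel_adj]
  exact ⟨hne, Or.inl h⟩

lemma mem_nbr_right (hirr : ∀ w, ¬ Arr w w) {u v : V} (h : Arr v u) :
    v ∈ (graph V Arr).neighborSet u := by
  have hne : u ≠ v := fun he => hirr u (by rw [he] at h ⊢; exact h)
  rw [SimpleGraph.mem_neighborSet]
  show (SimpleGraph.fromRel Arr).Adj u v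
  rw [SimpleGraph.fromRel_adj]
  exact ⟨hne, Or.inr h⟩

lemma on3_cycle {v x y : V} (h1 : Arr v x) (h2 : Arr x y) (h3 : Arr y v) :
    On3Cycle Arr v :=
  ⟨x, y, h1, h2, h3⟩

lemma val_le_two (hsh : IsTypeAShape Arr) {v : V} (h3 : ¬ On3Cycle Arr v) :
    valency V Arr v ≤ 2 := by
  by_contra h
  push_neg at h
  have h4 := hsh.valency_le_four v
  rcases Nat.lt_or_ge (valency V Arr v) 4 with hlt | hge
  · have hv : valency V Arr v = 3 := by omega
    obtain ⟨x, y, z, -, htri, -⟩ := hsh.valency_three v hv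
    exact h3 ⟨x, y, htri⟩
  · have hv : valency V Arr v = 4 := by omega
    obtain ⟨x, y, z, w, -, htri, -⟩ := hsh.valency_four v hv
    exact h3 ⟨x, y, htri⟩

/-- a vertex not on a 3-cycle with two distinct neighbours has exactly those neighbours. -/
lemma nbr_eq_pair (hsh : IsTypeAShape Arr) {v a b : V} (h3 : ¬ On3Cycle Arr v)
    (ha : a ∈ (graph V Arr).neighborSet v) (hb : b ∈ (graph V Arr).neighborSet v)
    (hab : a ≠ b) : (graph V Arr).neighborSet v = {a, b} := by
  refine (Set.eq_of_subset_of_ncard_le ?_ ?_ (Set.toFinite _)).symm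
  · intro x hx
    rcases hx with rfl | hx
    · exact ha
    · rw [Set.mem_singleton_iff] at hx; rw [hx]; exact hb
  · rw [Set.ncard_pair hab]
    exact val_le_two hsh h3

/-- a vertex not on a 3-cycle: any three neighbours must collide. -/
lemma nbr_third (hsh : IsTypeAShape Arr) {v a b x : V} (h3 : ¬ On3Cycle Arr v)
    (ha : a ∈ (graph V Arr).neighborSet v) (hb : b ∈ (graph V Arr).neighborSet v)
    (hx : x ∈ (graph V Arr).neighborSet v) (hab : a ≠ b) : x = a ∨ x = b := by
  have := nbr_eq_pair hsh h3 ha hb hab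
  rw [this] at hx
  rcases hx with rfl | hx
  · exact Or.inl rfl
  · exact Or.inr hx

/-- a vertex of valency three with three distinct neighbours has exactly those. -/
lemma nbr_eq_triple {v a b e : V} (hval : valency V Arr v = 3)
    (ha : a ∈ (graph V Arr).neighborSet v) (hb : b ∈ (graph V Arr).neighborSet v)
    (he : e ∈ (graph V Arr).neighborSet v)
    (hab : a ≠ b) (hae : a ≠ e) (hbe : b ≠ e) :
    (graph V Arr).neighborSet v = {a, b, e} := by
  refine (Set.eq_of_subset_of_ncard_le ?_ ?_ (Set.toFinite _)).symm
  · intro x hx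
    rcases hx with rfl | hx
    · exact ha
    rcases hx with rfl | hx
    · exact hb
    · rw [Set.mem_singleton_iff] at hx; rw [hx]; exact he
  · have h1 : ({a, b, e} : Set V).ncard = 3 := by
      rw [Set.ncard_insert_of_notMem (by simp [hab, hae]), Set.ncard_pair hbe]
    rw [h1]
    exact le_of_eq hval

/-- lists which form a composable chain of arrows starting at `v`. -/
def chainF : V → List (Edge V Arr) → Prop
  | _, [] => True
  | v, a :: l => a.1.1 = v ∧ chainF a.1.2 l

lemma glue_single_iff (a : Edge V Arr) : ∀ (l : List (Edge V Arr)),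
    (∀ (w : Edge V Arr) (l₁ : List (Edge V Arr)), l = l₁ ++ [w] → ¬ Arr a.1.2 w.1.1) →
    (glue l [a] ↔ glue l [])
  | [], _ => Iff.rfl
  | [w], h => by
      show (okhead w ([] ++ [a]) ∧ True) ↔ (okhead w ([] ++ []) ∧ True)
      constructor
      · rintro ⟨-, -⟩; exact ⟨trivial, trivial⟩
      · rintro ⟨-, -⟩; exact ⟨h w [] rfl, trivial⟩
  | w :: b :: l', h => by
      have IH := glue_single_iff a (b :: l')
        (fun w' l₁ hw => h w' (w :: l₁) (by rw [hw]; rfl))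
      show (okhead w ((b :: l') ++ [a]) ∧ glue (b :: l') [a]) ↔
        (okhead w ((b :: l') ++ []) ∧ glue (b :: l') [])
      constructor
      · rintro ⟨h1, h2⟩; exact ⟨h1, IH.mp h2⟩
      · rintro ⟨h1, h2⟩; exact ⟨h1, IH.mpr h2⟩

end CTAComb

section CTAIdent
open CTA

variable (k : Type) [Field k] {V : Type} [Fintype V] [DecidableEq V] {Arr : V → V → Prop}

open scoped Classical

/-- I1/I2 : the functional vanishes if the coefficient index cannot end at the seed. -/
lemma Gf_tgt_nil_zero (u v : V) (h : u ≠ v) :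
    Gf k ((u, ([] : List (Edge V Arr))) : Idx V Arr) ((v, []) : Idx V Arr) = 0 := by
  apply LinearMap.ext_on (span_PB_eq_top k (Arr := Arr))
  rintro x ⟨u', v', p, hp, rfl⟩
  rw [Gf_pe, LinearMap.zero_apply, if_neg]
  rintro ⟨h1, -, h3⟩
  rw [List.append_nil, Prod.mk.injEq] at h3
  obtain ⟨hu, hl⟩ := h3
  exact h (by rw [hu, tgt_eq_of_toL_nil p hl.symm, h1])

lemma Gf_tgt_last_zero (u v : V) (l₀ : List (Edge V Arr)) (b : Edge V Arr)
    (h : b.1.2 ≠ v) :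
    Gf k ((u, l₀ ++ [b]) : Idx V Arr) ((v, []) : Idx V Arr) = 0 := by
  apply LinearMap.ext_on (span_PB_eq_top k (Arr := Arr))
  rintro x ⟨u', v', p, hp, rfl⟩
  rw [Gf_pe, LinearMap.zero_apply, if_neg]
  rintro ⟨h1, -, h3⟩
  rw [List.append_nil, Prod.mk.injEq] at h3
  exact h (by rw [← tgt_eq_of_toL_concat p l₀ b h3.2.symm, h1])

/-- I3 : mismatch of the last arrow against a single-arrow seed. -/
lemma Gf_seed_single_zero (q : Idx V Arr) (a : Edge V Arr)
    (h : ∀ l₀, q.2 ≠ l₀ ++ [a]) :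
    Gf k q ((a.1.1, [a]) : Idx V Arr) = 0 := by
  apply LinearMap.ext_on (span_PB_eq_top k (Arr := Arr))
  rintro x ⟨u', v', p, hp, rfl⟩
  rw [Gf_pe, LinearMap.zero_apply, if_neg]
  rintro ⟨-, -, h3⟩
  exact h (toL p) (by rw [h3])

/-- I4/I5 : appending an arrow to the coefficient index and to the seed. -/
lemma Gf_append_single (q1 : V) (l : List (Edge V Arr)) (a : Edge V Arr)
    (h : ∀ (w : Edge V Arr) (l₁ : List (Edge V Arr)), l = l₁ ++ [w] → w.1.2 = a.1.1 →
      ¬ Arr a.1.2 w.1.1) :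
    Gf k ((q1, l) : Idx V Arr) ((a.1.1, []) : Idx V Arr) =
      Gf k ((q1, l ++ [a]) : Idx V Arr) ((a.1.1, [a]) : Idx V Arr) := by
  apply LinearMap.ext_on (span_PB_eq_top k (Arr := Arr))
  rintro x ⟨u', v', p, hp, rfl⟩
  rw [Gf_pe, Gf_pe]
  simp only [List.append_nil, Prod.mk.injEq]
  by_cases hq : q1 = u' ∧ l = toL p
  · obtain ⟨hq1, hq2⟩ := hq
    subst hq2
    split_ifs with c1 c2 c2
    · rfl
    · have hg := glue_single_iff a (toL p) (fun w l₁ heq => h w l₁ heq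
        (by rw [← tgt_eq_of_toL_concat p l₁ w heq]; exact c1.1))
      exact absurd ⟨c1.1, hg.mpr c1.2.1, hq1, rfl⟩ c2
    · have hg := glue_single_iff a (toL p) (fun w l₁ heq => h w l₁ heq
        (by rw [← tgt_eq_of_toL_concat p l₁ w heq]; exact c2.1))
      exact absurd ⟨c2.1, hg.mp c2.2.1, hq1, rfl⟩ c1
    · rfl
  · split_ifs with c1 c2 c2
    · rfl
    · exact absurd ⟨c1.2.2.1, c1.2.2.2⟩ hq
    · exact absurd ⟨c2.2.2.1, List.append_left_injective [a] c2.2.2.2⟩ hq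
    · rfl

/-- I6 : equal coefficient list and seed list reduce to the empty ones. -/
lemma Gf_diag (u v : V) (m : List (Edge V Arr)) :
    Gf k ((u, m) : Idx V Arr) ((v, m) : Idx V Arr) =
      Gf k ((u, ([] : List (Edge V Arr))) : Idx V Arr) ((v, []) : Idx V Arr) := by
  apply LinearMap.ext_on (span_PB_eq_top k (Arr := Arr))
  rintro x ⟨u', v', p, hp, rfl⟩
  rw [Gf_pe, Gf_pe]
  simp only [List.append_nil, Prod.mk.injEq]
  by_cases h2 : toL p = []
  · rw [h2]
    simp [glue]
  · split_ifs with c1 c2 c2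
    · rfl
    · exfalso
      apply h2
      have h4 := c1.2.2.2
      have h5 : toL p ++ m = [] ++ m := by rw [← h4]; rfl
      exact List.append_left_injective m h5
    · exact absurd c2.2.2.2.symm h2
    · rfl
end CTAIdent
section CTAMoves
open CTA

variable {V : Type} [Fintype V] [DecidableEq V] {Arr : V → V → Prop}

lemma chainF_toL : ∀ {u v : V} (p : Pth Arr u v), chainF u (toL p)
  | _, _, .nil _ => trivial
  | _, _, .cons h p => ⟨rfl, chainF_toL p⟩

lemma concat_last_eq {X : Type} {l₀ l₁ : List X} {b w : X} (h : l₀ ++ [b] = l₁ ++ [w]) :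
    w = b := by
  have h2 := congrArg List.getLast? h
  rw [List.getLast?_concat, List.getLast?_concat] at h2
  exact (Option.some.injEq _ _ ▸ h2).symm

variable (k : Type) [Field k]

lemma Gf_comp_mulLeft_ar_match (a : Edge V Arr) (L : List (Edge V Arr)) (hok : okhead a L)
    (s₀ : Idx V Arr) :
    (Gf k ((a.1.1, a :: L) : Idx V Arr) s₀) ∘ₗ LinearMap.mulLeft k (ar k a) =
      Gf k ((a.1.2, L) : Idx V Arr) s₀ :=
  LinearMap.ext fun x => by
    rw [LinearMap.comp_apply, LinearMap.mulLeft_apply]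
    exact Gf_ar_left_match k a L hok s₀ x

lemma Gf_comp_mulLeft_ar_bad (a : Edge V Arr) (L : List (Edge V Arr)) (hok : ¬ okhead a L)
    (s₀ : Idx V Arr) :
    (Gf k ((a.1.1, a :: L) : Idx V Arr) s₀) ∘ₗ LinearMap.mulLeft k (ar k a) = 0 :=
  LinearMap.ext fun x => by
    rw [LinearMap.comp_apply, LinearMap.mulLeft_apply, LinearMap.zero_apply]
    exact Gf_ar_left_bad k a L hok s₀ x

lemma Gf_comp_mulLeft_ar_nomatch (a : Edge V Arr) (t : Idx V Arr)
    (h : ∀ L', t ≠ ((a.1.1, a :: L') : Idx V Arr)) (s₀ : Idx V Arr) :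
    (Gf k t s₀) ∘ₗ LinearMap.mulLeft k (ar k a) = 0 :=
  LinearMap.ext fun x => by
    rw [LinearMap.comp_apply, LinearMap.mulLeft_apply, LinearMap.zero_apply]
    exact Gf_ar_left_nomatch k a t h s₀ x

lemma Gf_comp_mulLeft_ee_self (t s₀ : Idx V Arr) :
    (Gf k t s₀) ∘ₗ LinearMap.mulLeft k (ee k t.1) = Gf k t s₀ :=
  LinearMap.ext fun x => by
    rw [LinearMap.comp_apply, LinearMap.mulLeft_apply, Gf_ee_left, if_pos rfl]

lemma Gf_comp_mulRight_ar_match (q : Idx V Arr) (a : Edge V Arr) (s2 : List (Edge V Arr))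
    (hok : okhead a s2) :
    (Gf k q ((a.1.2, s2) : Idx V Arr)) ∘ₗ LinearMap.mulRight k (ar k a) =
      Gf k q ((a.1.1, a :: s2) : Idx V Arr) :=
  LinearMap.ext fun x => by
    rw [LinearMap.comp_apply, LinearMap.mulRight_apply]
    exact Gf_ar_right_match k q ((a.1.2, s2) : Idx V Arr) a rfl hok x

lemma Gf_comp_mulRight_ee_ne (q s : Idx V Arr) (v : V) (h : s.1 ≠ v) :
    (Gf k q s) ∘ₗ LinearMap.mulRight k (ee k v) = 0 :=
  LinearMap.ext fun x => by
    rw [LinearMap.comp_apply, LinearMap.mulRight_apply, LinearMap.zero_apply,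
      Gf_ee_right, if_neg h]

variable {c : ctAlg k V Arr ⊗[k] ctAlg k V Arr}
variable (hcent : ∀ x : ctAlg k V Arr,
  (x ⊗ₜ[k] (1 : ctAlg k V Arr)) * c = c * ((1 : ctAlg k V Arr) ⊗ₜ[k] x))

include hcent

/-- the sliding move along an arrow. -/
lemma move_ar (a : Edge V Arr) (s₀ q : Idx V Arr) (s2 : List (Edge V Arr))
    (hs : okhead a s2) (L : List (Edge V Arr)) (hok : okhead a L) :
    TT k (Gf k ((a.1.2, L) : Idx V Arr) s₀) (Gf k q ((a.1.2, s2) : Idx V Arr)) c =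
      TT k (Gf k ((a.1.1, a :: L) : Idx V Arr) s₀)
        (Gf k q ((a.1.1, a :: s2) : Idx V Arr)) c := by
  have h := congrArg (TT k (Gf k ((a.1.1, a :: L) : Idx V Arr) s₀)
    (Gf k q ((a.1.2, s2) : Idx V Arr))) (hcent (ar k a))
  rw [TT_mulLeft, TT_mulRight, Gf_comp_mulLeft_ar_match k a L hok,
    Gf_comp_mulRight_ar_match k q a s2 hs] at h
  exact h

/-- the kill move: the first index does not start with the arrow. -/
lemma move_ar_kill (a : Edge V Arr) (t s₀ q : Idx V Arr) (s2 : List (Edge V Arr))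
    (hs : okhead a s2) (hsh : ∀ L', t ≠ ((a.1.1, a :: L') : Idx V Arr)) :
    TT k (Gf k t s₀) (Gf k q ((a.1.1, a :: s2) : Idx V Arr)) c = 0 := by
  have h := congrArg (TT k (Gf k t s₀) (Gf k q ((a.1.2, s2) : Idx V Arr))) (hcent (ar k a))
  rw [TT_mulLeft, TT_mulRight, Gf_comp_mulLeft_ar_nomatch k a t hsh,
    Gf_comp_mulRight_ar_match k q a s2 hs] at h
  rw [← h, TT_zero_left]

/-- the support move: sources must agree. -/
lemma move_src_eq (t s₀ q s : Idx V Arr) (h : t.1 ≠ s.1) :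
    TT k (Gf k t s₀) (Gf k q s) c = 0 := by
  have h2 := congrArg (TT k (Gf k t s₀) (Gf k q s)) (hcent (ee k t.1))
  rw [TT_mulLeft, TT_mulRight, Gf_comp_mulLeft_ee_self,
    Gf_comp_mulRight_ee_ne k q s t.1 h.symm] at h2
  rw [h2, TT_zero_right]

end CTAMoves
open CTA in
/-- In a cluster-tilted algebra of type `𝔸` whose quiver contains a saturated oriented
3-cycle `i → i+1 → d₁ → i` together with a tail `d₁, d₂, …, d_t` (`t ≥ 2`, arbitrary
orientations), where `d₁` has valency three and `d₂, …, d_t` lie on no oriented 3-cycle,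
every open Frobenius structure `Δ` with `Δ(β) = Δ(γ) = 0` satisfies `Δ(e_{d_j}) = 0` for
all `j`. (Here the tail has `t+2 ≥ 2` vertices `d 0, …, d (t+1)`.) -/
theorem frob_vanishes_on_added_tail (k : Type) [Field k] (V : Type) [Fintype V]
    [DecidableEq V] (Arr : V → V → Prop) (hQ : IsTypeA Arr)
    (i i1 : V) (t : ℕ) (d : Fin (t + 2) → V) (hinj : Function.Injective d)
    (hα : Arr i i1) (hγ : Arr i1 (d 0)) (hβ : Arr (d 0) i)
    (htail : ∀ j : Fin (t + 1), (graph V Arr).Adj (d j.castSucc) (d j.succ))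
    (hval : valency V Arr (d 0) = 3)
    (hno3 : ∀ j : Fin (t + 2), 1 ≤ (j : ℕ) → ¬ On3Cycle Arr (d j)) :
    ∀ Δ : ctAlg k V Arr →ₗ[k] ctAlg k V Arr ⊗[k] ctAlg k V Arr,
      Δ ∈ FrobSpace k (ctAlg k V Arr) →
      Δ (arrEl k V Arr (satSet k V Arr) ⟨(d 0, i), hβ⟩) = 0 →
      Δ (arrEl k V Arr (satSet k V Arr) ⟨(i1, d 0), hγ⟩) = 0 →
      ∀ j : Fin (t + 2), Δ (e k V Arr (satSet k V Arr) (d j)) = 0 := by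
  classical
  intro Δ hΔ hb0 hg0 j
  have hsh := hQ.1
  have hirr := hsh.irrefl
  have hno2 := hsh.no_two_cycle
  set c : ctAlg k V Arr ⊗[k] ctAlg k V Arr := Δ 1 with hc
  have hfr : IsOpenFrobenius k (ctAlg k V Arr) Δ := hΔ
  have h1 : ∀ x, Δ x = (x ⊗ₜ[k] (1 : ctAlg k V Arr)) * c := by
    intro x; have := (hfr x 1).1; rwa [mul_one] at this
  have h2 : ∀ x, Δ x = c * ((1 : ctAlg k V Arr) ⊗ₜ[k] x) := by
    intro x; have := (hfr 1 x).2; rwa [one_mul] at this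
  have hcent : ∀ x : ctAlg k V Arr,
      (x ⊗ₜ[k] (1 : ctAlg k V Arr)) * c = c * ((1 : ctAlg k V Arr) ⊗ₜ[k] x) := by
    intro x; rw [← h1, ← h2]
  have hγL : (ar k (⟨(i1, d 0), hγ⟩ : Edge V Arr) ⊗ₜ[k] (1 : ctAlg k V Arr)) * c = 0 := by
    rw [← h1]; exact hg0
  have hβR : c * ((1 : ctAlg k V Arr) ⊗ₜ[k] ar k (⟨(d 0, i), hβ⟩ : Edge V Arr)) = 0 := by
    rw [← h2]; exact hb0
  -- basic vertex facts
  have hlt1 : (1 : ℕ) < t + 2 := by omega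
  have hii1 : i ≠ i1 := fun h => hirr i1 (h ▸ hα)
  have hd1i : d ⟨1, hlt1⟩ ≠ i := by
    intro h
    refine hno3 ⟨1, hlt1⟩ (le_refl 1) (on3_cycle (x := i1) (y := d 0) ?_ hγ ?_)
    · rw [h]; exact hα
    · rw [h]; exact hβ
  have hd1i1 : d ⟨1, hlt1⟩ ≠ i1 := by
    intro h
    refine hno3 ⟨1, hlt1⟩ (le_refl 1) (on3_cycle (x := d 0) (y := i) ?_ hβ ?_)
    · rw [h]; exact hγ
    · rw [h]; exact hα
  have hadj : ∀ (m : ℕ) (hm : m + 1 < t + 2),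
      (graph V Arr).Adj (d ⟨m, by omega⟩) (d ⟨m + 1, hm⟩) := by
    intro m hm
    exact htail ⟨m, by omega⟩
  have hadj' : ∀ (m : ℕ) (hm : m + 1 < t + 2),
      Arr (d ⟨m, by omega⟩) (d ⟨m + 1, hm⟩) ∨ Arr (d ⟨m + 1, hm⟩) (d ⟨m, by omega⟩) := by
    intro m hm
    have h := hadj m hm
    rw [graph, SimpleGraph.fromRel_adj] at h
    exact h.2
  have hd1mem : d ⟨1, hlt1⟩ ∈ (graph V Arr).neighborSet (d 0) := by
    have h := hadj 0 hlt1
    have h0 : (⟨0, by omega⟩ : Fin (t + 2)) = 0 := rfl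
    rw [h0] at h
    exact h
  have hNd0 : (graph V Arr).neighborSet (d 0) = {i, i1, d ⟨1, hlt1⟩} :=
    nbr_eq_triple hval (mem_nbr_left hirr hβ) (mem_nbr_right hirr hγ) hd1mem
      hii1 (Ne.symm hd1i) (Ne.symm hd1i1)
  -- the master induction
  have MASTER : ∀ (n : ℕ) (hn : n < t + 2) (L : List (Edge V Arr)) (q1 : V)
      (ql : List (Edge V Arr)) (s₀ : Idx V Arr), chainF (d ⟨n, hn⟩) L → glue L [] →
      TT k (Gf k ((d ⟨n, hn⟩, L) : Idx V Arr) s₀)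
        (Gf k ((q1, ql) : Idx V Arr) ((d ⟨n, hn⟩, []) : Idx V Arr)) c = 0 := by
    intro n
    induction n with
    | zero =>
      intro hn L q1 ql s₀ hchain hglue
      have e0 : (⟨0, hn⟩ : Fin (t + 2)) = 0 := rfl
      rw [e0] at hchain ⊢
      by_cases hok : okhead (⟨(i1, d 0), hγ⟩ : Edge V Arr) L
      · -- kill by Δ(γ) = 0 acting on the left
        have h := congrArg (TT k
          (Gf k (((⟨(i1, d 0), hγ⟩ : Edge V Arr).1.1,
            (⟨(i1, d 0), hγ⟩ : Edge V Arr) :: L) : Idx V Arr) s₀)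
          (Gf k ((q1, ql) : Idx V Arr) ((d 0, []) : Idx V Arr))) hγL
        rw [TT_mulLeft, Gf_comp_mulLeft_ar_match k (⟨(i1, d 0), hγ⟩ : Edge V Arr) L hok s₀,
          map_zero] at h
        exact h
      · -- the list starts with β
        cases L with
        | nil => exact absurd trivial hok
        | cons b₀ L2 =>
          have hb₀arr : Arr b₀.1.2 i1 := not_not.mp hok
          have hb₀src : b₀.1.1 = d 0 := hchain.1
          have hb₀tgt : b₀.1.2 = i := by
            have hmem : b₀.1.2 ∈ (graph V Arr).neighborSet (d 0) :=
              mem_nbr_left hirr (hb₀src ▸ b₀.2)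
            rw [hNd0] at hmem
            rcases hmem with h | h | h
            · exact h
            · exact absurd (h ▸ hb₀src ▸ b₀.2) (hno2 i1 (d 0) hγ)
            · exfalso
              refine hno3 ⟨1, hlt1⟩ (le_refl 1) (on3_cycle (x := i1) (y := d 0)
                (h ▸ hb₀arr) hγ (h ▸ hb₀src ▸ b₀.2))
          have hb₀ : b₀ = (⟨(d 0, i), hβ⟩ : Edge V Arr) :=
            Subtype.ext (Prod.ext hb₀src hb₀tgt)
          rw [hb₀] at hchain hglue ⊢
          have hokβ : okhead (⟨(d 0, i), hβ⟩ : Edge V Arr) L2 := by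
            have h := hglue.1
            rwa [List.append_nil] at h
          rcases List.eq_nil_or_concat ql with rfl | ⟨l₀, b, hql⟩
          · -- trivial coefficient index: diagonal or mismatch
            by_cases hq1 : q1 = d 0
            · subst hq1
              rw [← Gf_diag k (d 0) (d 0) [(⟨(d 0, i), hβ⟩ : Edge V Arr)]]
              have h := congrArg (TT k
                (Gf k ((d 0, (⟨(d 0, i), hβ⟩ : Edge V Arr) :: L2) : Idx V Arr) s₀)
                (Gf k ((d 0, [(⟨(d 0, i), hβ⟩ : Edge V Arr)]) : Idx V Arr)
                  (((⟨(d 0, i), hβ⟩ : Edge V Arr).1.2, []) : Idx V Arr))) hβR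
              rw [TT_mulRight, Gf_comp_mulRight_ar_match k _
                (⟨(d 0, i), hβ⟩ : Edge V Arr) [] trivial, map_zero] at h
              exact h
            · rw [Gf_tgt_nil_zero k q1 (d 0) hq1, TT_zero_right]
          · subst hql
            rw [List.concat_eq_append]
            by_cases hb2 : b.1.2 = d 0
            · by_cases hbγ : b = (⟨(i1, d 0), hγ⟩ : Edge V Arr)
              · -- coefficient index ends with γ : use the tail edge
                rcases hadj' 0 hlt1 with hε | hε
                · -- out-arrow d 0 → d 1
                  rw [Gf_append_single k q1 (l₀ ++ [b])
                    (⟨(d 0, d ⟨1, hlt1⟩), hε⟩ : Edge V Arr) ?_]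
                  · refine move_ar_kill k hcent (⟨(d 0, d ⟨1, hlt1⟩), hε⟩ : Edge V Arr)
                      ((d 0, (⟨(d 0, i), hβ⟩ : Edge V Arr) :: L2) : Idx V Arr) s₀ _ []
                      trivial ?_
                    intro L' hE
                    have h3 := (Prod.ext_iff.mp hE).2
                    have h4 := (List.cons.injEq _ _ _ _ ▸ h3).1
                    have h5 : i = d ⟨1, hlt1⟩ :=
                      congrArg (fun e : Edge V Arr => (e : V × V).2) h4
                    exact hd1i h5.symm
                  · intro w l₁ he hw2 harr
                    have hwb : w = b := concat_last_eq he
                    rw [hwb, hbγ] at harr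
                    exact hno3 ⟨1, hlt1⟩ (le_refl 1) (on3_cycle harr hγ hε)
                · -- in-arrow d 1 → d 0
                  have hokE : okhead (⟨(d ⟨1, hlt1⟩, d 0), hε⟩ : Edge V Arr)
                      ((⟨(d 0, i), hβ⟩ : Edge V Arr) :: L2) := by
                    intro harr
                    exact hno3 ⟨1, hlt1⟩ (le_refl 1) (on3_cycle hε hβ harr)
                  refine (move_ar k hcent (⟨(d ⟨1, hlt1⟩, d 0), hε⟩ : Edge V Arr) s₀
                    ((q1, l₀ ++ [b]) : Idx V Arr) [] trivial _ hokE).trans ?_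
                  rw [Gf_seed_single_zero k ((q1, l₀ ++ [b]) : Idx V Arr)
                    (⟨(d ⟨1, hlt1⟩, d 0), hε⟩ : Edge V Arr) ?_, TT_zero_right]
                  intro l₀' he
                  have hwb := concat_last_eq (he : l₀ ++ [b] = l₀' ++ [_])
                  rw [hbγ] at hwb
                  have h5 := congrArg (fun e : Edge V Arr => (e : V × V).1) hwb
                  exact hd1i1 h5
              · -- coefficient index ends with the arrow d 1 → d 0 : use Δ(β) = 0
                have hbsrc : b.1.1 = d ⟨1, hlt1⟩ := by
                  have hmem : b.1.1 ∈ (graph V Arr).neighborSet (d 0) :=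
                    mem_nbr_right hirr (hb2 ▸ b.2)
                  rw [hNd0] at hmem
                  rcases hmem with h | h | h
                  · exfalso
                    have harr : Arr i (d 0) := by rw [← h, ← hb2]; exact b.2
                    exact hno2 (d 0) i hβ harr
                  · exact absurd (Subtype.ext (Prod.ext h hb2)) hbγ
                  · exact h
                rw [Gf_append_single k q1 (l₀ ++ [b]) (⟨(d 0, i), hβ⟩ : Edge V Arr) ?_]
                · have h := congrArg (TT k
                    (Gf k ((d 0, (⟨(d 0, i), hβ⟩ : Edge V Arr) :: L2) : Idx V Arr) s₀)
                    (Gf k ((q1, (l₀ ++ [b]) ++ [(⟨(d 0, i), hβ⟩ : Edge V Arr)]) : Idx V Arr)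
                      (((⟨(d 0, i), hβ⟩ : Edge V Arr).1.2, []) : Idx V Arr))) hβR
                  rw [TT_mulRight, Gf_comp_mulRight_ar_match k _
                    (⟨(d 0, i), hβ⟩ : Edge V Arr) [] trivial, map_zero] at h
                  exact h
                · intro w l₁ he hw2 harr
                  have hwb : w = b := concat_last_eq he
                  rw [hwb, hbsrc] at harr
                  exact hno3 ⟨1, hlt1⟩ (le_refl 1)
                    (on3_cycle (hbsrc ▸ (hb2 ▸ b.2)) hβ harr)
            · rw [Gf_tgt_last_zero k q1 (d 0) l₀ b hb2, TT_zero_right]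
    | succ m ih =>
      intro hn L q1 ql s₀ hchain hglue
      have hmlt : m < t + 2 := by omega
      have hnotri : ¬ On3Cycle Arr (d ⟨m + 1, hn⟩) :=
        hno3 ⟨m + 1, hn⟩ (Nat.succ_le_succ (Nat.zero_le m))
      have htriK : ∀ x y : V, Arr (d ⟨m + 1, hn⟩) x → Arr x y → Arr y (d ⟨m + 1, hn⟩) →
          False := fun x y hx hy hz => hnotri (on3_cycle hx hy hz)
      have hadjm : (graph V Arr).Adj (d ⟨m, hmlt⟩) (d ⟨m + 1, hn⟩) := hadj m hn
      have horient := hadj' m hn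
      have hdm_ne : d ⟨m, hmlt⟩ ≠ d ⟨m + 1, hn⟩ := by
        intro h
        have := hinj h
        simp [Fin.ext_iff] at this
      rcases List.eq_nil_or_concat ql with rfl | ⟨l₀, b, hql⟩
      · by_cases hq1 : q1 = d ⟨m + 1, hn⟩
        · subst hq1
          rcases horient with hε | hε
          · -- in-arrow d m → d (m+1)
            have hokL : okhead (⟨(d ⟨m, hmlt⟩, d ⟨m + 1, hn⟩), hε⟩ : Edge V Arr) L := by
              cases L with
              | nil => trivial
              | cons a L2 =>
                intro harr
                exact htriK a.1.2 (d ⟨m, hmlt⟩) (hchain.1 ▸ a.2) harr hε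
            refine (move_ar k hcent (⟨(d ⟨m, hmlt⟩, d ⟨m + 1, hn⟩), hε⟩ : Edge V Arr) s₀
              ((d ⟨m + 1, hn⟩, []) : Idx V Arr) [] trivial L hokL).trans ?_
            rw [Gf_seed_single_zero k ((d ⟨m + 1, hn⟩, []) : Idx V Arr)
              (⟨(d ⟨m, hmlt⟩, d ⟨m + 1, hn⟩), hε⟩ : Edge V Arr) (by simp), TT_zero_right]
          · -- out-arrow d (m+1) → d m
            rw [Gf_append_single k (d ⟨m + 1, hn⟩) []
              (⟨(d ⟨m + 1, hn⟩, d ⟨m, hmlt⟩), hε⟩ : Edge V Arr)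
              (fun w l₁ he _ => by simp at he)]
            cases L with
            | nil =>
              refine move_ar_kill k hcent (⟨(d ⟨m + 1, hn⟩, d ⟨m, hmlt⟩), hε⟩ : Edge V Arr)
                ((d ⟨m + 1, hn⟩, []) : Idx V Arr) s₀ _ [] trivial ?_
              intro L' hE
              have h3 := (Prod.ext_iff.mp hE).2
              simp at h3
            | cons a L2 =>
              by_cases ha : a = (⟨(d ⟨m + 1, hn⟩, d ⟨m, hmlt⟩), hε⟩ : Edge V Arr)
              · subst ha
                have hok2 : okhead (⟨(d ⟨m + 1, hn⟩, d ⟨m, hmlt⟩), hε⟩ : Edge V Arr) L2 := by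
                  have h := hglue.1
                  rwa [List.append_nil] at h
                refine ((move_ar k hcent (⟨(d ⟨m + 1, hn⟩, d ⟨m, hmlt⟩), hε⟩ : Edge V Arr)
                  s₀ _ [] trivial L2 hok2).symm.trans ?_)
                exact ih hmlt L2 (d ⟨m + 1, hn⟩) ([] ++ [(⟨(d ⟨m + 1, hn⟩, d ⟨m, hmlt⟩), hε⟩ :
                  Edge V Arr)]) s₀ hchain.2 hglue.2
              · refine move_ar_kill k hcent (⟨(d ⟨m + 1, hn⟩, d ⟨m, hmlt⟩), hε⟩ : Edge V Arr)
                  ((d ⟨m + 1, hn⟩, a :: L2) : Idx V Arr) s₀ _ [] trivial ?_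
                intro L' hE
                have h3 := (Prod.ext_iff.mp hE).2
                exact ha (List.cons.injEq _ _ _ _ ▸ h3).1
        · rw [Gf_tgt_nil_zero k q1 (d ⟨m + 1, hn⟩) hq1, TT_zero_right]
      · subst hql
        rw [List.concat_eq_append]
        by_cases hb2 : b.1.2 = d ⟨m + 1, hn⟩
        · by_cases hbsrc : b.1.1 = d ⟨m, hmlt⟩
          · -- backward slide along b
            have hεb : Arr (d ⟨m, hmlt⟩) (d ⟨m + 1, hn⟩) := by
              rw [← hbsrc, ← hb2]; exact b.2
            have hbeq : b = (⟨(d ⟨m, hmlt⟩, d ⟨m + 1, hn⟩), hεb⟩ : Edge V Arr) :=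
              Subtype.ext (Prod.ext hbsrc hb2)
            rw [hbeq]
            have hokL : okhead (⟨(d ⟨m, hmlt⟩, d ⟨m + 1, hn⟩), hεb⟩ : Edge V Arr) L := by
              cases L with
              | nil => trivial
              | cons a L2 =>
                intro harr
                exact htriK a.1.2 (d ⟨m, hmlt⟩) (hchain.1 ▸ a.2) harr hεb
            refine (move_ar k hcent (⟨(d ⟨m, hmlt⟩, d ⟨m + 1, hn⟩), hεb⟩ : Edge V Arr) s₀
              ((q1, l₀ ++ [(⟨(d ⟨m, hmlt⟩, d ⟨m + 1, hn⟩), hεb⟩ : Edge V Arr)]) : Idx V Arr)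
              [] trivial L hokL).trans ?_
            rw [← Gf_append_single k q1 l₀
              (⟨(d ⟨m, hmlt⟩, d ⟨m + 1, hn⟩), hεb⟩ : Edge V Arr) ?_]
            · exact ih hmlt ((⟨(d ⟨m, hmlt⟩, d ⟨m + 1, hn⟩), hεb⟩ : Edge V Arr) :: L) q1 l₀
                s₀ ⟨rfl, hchain⟩ ⟨by rw [List.append_nil]; exact hokL, hglue⟩
            · intro w l₁ he hw2 harr
              have hw2' : w.1.2 = d ⟨m, hmlt⟩ := hw2
              have h6 : Arr w.1.1 (d ⟨m, hmlt⟩) := by rw [← hw2']; exact w.2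
              exact htriK w.1.1 (d ⟨m, hmlt⟩) harr h6 hεb
          · -- forward move
            cases L with
            | nil =>
              rcases horient with hε | hε
              · refine (move_ar k hcent (⟨(d ⟨m, hmlt⟩, d ⟨m + 1, hn⟩), hε⟩ : Edge V Arr) s₀
                  ((q1, l₀ ++ [b]) : Idx V Arr) [] trivial [] trivial).trans ?_
                rw [Gf_seed_single_zero k ((q1, l₀ ++ [b]) : Idx V Arr)
                  (⟨(d ⟨m, hmlt⟩, d ⟨m + 1, hn⟩), hε⟩ : Edge V Arr) ?_, TT_zero_right]
                intro l₀' he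
                have hwb := concat_last_eq (he : l₀ ++ [b] = l₀' ++ [_])
                apply hbsrc
                rw [← hwb]
              · rw [Gf_append_single k q1 (l₀ ++ [b])
                  (⟨(d ⟨m + 1, hn⟩, d ⟨m, hmlt⟩), hε⟩ : Edge V Arr) ?_]
                · refine move_ar_kill k hcent
                    (⟨(d ⟨m + 1, hn⟩, d ⟨m, hmlt⟩), hε⟩ : Edge V Arr)
                    ((d ⟨m + 1, hn⟩, []) : Idx V Arr) s₀ _ [] trivial ?_
                  intro L' hE
                  have h3 := (Prod.ext_iff.mp hE).2
                  simp at h3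
                · intro w l₁ he hw2 harr
                  have hwb : w = b := concat_last_eq he
                  rw [hwb] at harr
                  exact htriK (d ⟨m, hmlt⟩) b.1.1 hε harr (hb2 ▸ b.2)
            | cons a L2 =>
              have harr_a : Arr (d ⟨m + 1, hn⟩) a.1.2 := by
                rw [← hchain.1]; exact a.2
              have harr_b : Arr b.1.1 (d ⟨m + 1, hn⟩) := by
                rw [← hb2]; exact b.2
              have hmem_a : a.1.2 ∈ (graph V Arr).neighborSet (d ⟨m + 1, hn⟩) :=
                mem_nbr_left hirr harr_a
              have hmem_b : b.1.1 ∈ (graph V Arr).neighborSet (d ⟨m + 1, hn⟩) :=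
                mem_nbr_right hirr harr_b
              have hmem_m : d ⟨m, hmlt⟩ ∈ (graph V Arr).neighborSet (d ⟨m + 1, hn⟩) :=
                hadjm.symm
              have hatgt : a.1.2 = d ⟨m, hmlt⟩ := by
                rcases nbr_third hsh hnotri hmem_m hmem_b hmem_a
                  (fun h => hbsrc h.symm) with h | h
                · exact h
                · exfalso
                  exact hno2 (d ⟨m + 1, hn⟩) a.1.2 harr_a (by rw [h]; exact harr_b)
              have hok2 : okhead a L2 := by
                have h := hglue.1
                rwa [List.append_nil] at h
              have hadj2 : Arr (d ⟨m + 1, hn⟩) (d ⟨m, hmlt⟩) := by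
                rw [← hatgt]; exact harr_a
              have haeq : a = (⟨(d ⟨m + 1, hn⟩, d ⟨m, hmlt⟩), hadj2⟩ : Edge V Arr) :=
                Subtype.ext (Prod.ext hchain.1 hatgt)
              rw [haeq] at hok2 hchain hglue ⊢
              rw [Gf_append_single k q1 (l₀ ++ [b])
                (⟨(d ⟨m + 1, hn⟩, d ⟨m, hmlt⟩), hadj2⟩ : Edge V Arr) ?_]
              · refine ((move_ar k hcent
                  (⟨(d ⟨m + 1, hn⟩, d ⟨m, hmlt⟩), hadj2⟩ : Edge V Arr) s₀
                  ((q1, (l₀ ++ [b]) ++ [(⟨(d ⟨m + 1, hn⟩, d ⟨m, hmlt⟩), hadj2⟩ :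
                    Edge V Arr)]) : Idx V Arr) [] trivial L2 hok2).symm.trans ?_)
                exact ih hmlt L2 q1 _ s₀ hchain.2 hglue.2
              · intro w l₁ he hw2 harr
                have hwb : w = b := concat_last_eq he
                rw [hwb] at harr
                exact htriK (d ⟨m, hmlt⟩) b.1.1 hadj2 harr harr_b
        · rw [Gf_tgt_last_zero k q1 (d ⟨m + 1, hn⟩) l₀ b hb2, TT_zero_right]
  -- assembly
  rw [h1]
  show (ee k (d j) ⊗ₜ[k] (1 : ctAlg k V Arr)) * c = 0
  apply zero_of_coords k
  intro u v u' v' p q hp hq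
  have step1 := TT_mulLeft k (Gf k ((u, toL p) : Idx V Arr) ((v, []) : Idx V Arr))
    (Gf k ((u', toL q) : Idx V Arr) ((v', []) : Idx V Arr)) (ee k (d j)) c
  rw [step1]
  by_cases hu : u = d j
  · subst hu
    have step2 : (Gf k ((d j, toL p) : Idx V Arr) ((v, []) : Idx V Arr)) ∘ₗ
        LinearMap.mulLeft k (ee k (d j)) =
        Gf k ((d j, toL p) : Idx V Arr) ((v, []) : Idx V Arr) :=
      Gf_comp_mulLeft_ee_self k ((d j, toL p) : Idx V Arr) ((v, []) : Idx V Arr)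
    rw [step2]
    by_cases hv' : v' = d j
    · subst hv'
      have hM := MASTER (j : ℕ) j.isLt (toL p) u' (toL q) ((v, []) : Idx V Arr)
        (by rw [Fin.eta]; exact chainF_toL p) hp
      rw [Fin.eta] at hM
      exact hM
    · exact move_src_eq k hcent ((d j, toL p) : Idx V Arr) ((v, []) : Idx V Arr)
        ((u', toL q) : Idx V Arr) ((v', []) : Idx V Arr) (fun h => hv' h.symm)
  · have step2 : (Gf k ((u, toL p) : Idx V Arr) ((v, []) : Idx V Arr)) ∘ₗ
        LinearMap.mulLeft k (ee k (d j)) = 0 :=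
      LinearMap.ext fun x => by
        rw [LinearMap.comp_apply, LinearMap.mulLeft_apply, Gf_ee_left, if_neg hu,
          LinearMap.zero_apply]
    rw [step2, TT_zero_left]
end

section
/- Let A = kQ/I be a cluster-tilted algebra of type A whose quiver contains arrows α_i : i → i+1, γ : i+1 → d_1, β : d_1 → i forming a saturated oriented 3-cycle, where d_1 has valency two in Q (its only adjacent arrows are β and γ). If Δ is an open Frobenius structure on A with Δ(β) = Δ(γ) = 0, then Δ(e_{d_1}) = Σ_{ρ,μ} A_{ρμ} (βρ) ⊗ (μγ), the sum ranging over paths ρ with source i and paths μ with target i+1 (including trivial paths), for some scalars A_{ρμ} ∈ k. In particular, if the quiver is linearly oriented near the cycle, i.e. the only other arrows at i and i+1 are i−1 → i and i+1 → i+2, then Δ(e_{d_1}) = A · (β ⊗ γ) for some A ∈ k. -/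
open scoped TensorProduct

/-!
Write `e = e_{d₁}`. As `Δ` is a bimodule map and `e² = e`, `Δ e = (e ⊗ 1) Δ(e) (1 ⊗ e)` lies in
`eA ⊗ Ae`. Since `β` is the only arrow leaving `d₁` and `γ` the only one entering it,
`eA = k e + βA` and `Ae = k e + Aγ`. Multiplying `Δ e` on the left by `γ ⊗ 1` gives `Δ γ = 0`;
as `γβ = 0` in the saturated 3-cycle, only the part `e ⊗ y` survives, as `γ ⊗ y`, so `y = 0`
because `γ ≠ 0`. Symmetrically on the right with `β`, hence `Δ e ∈ βA ⊗ Aγ`, which is spanned by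
the `βρ ⊗ μγ`. Under linear orientation `α` is the only arrow leaving `i` and the only one
entering `i+1`, and `βα = αγ = 0` give `βA = kβ`, `Aγ = kγ`.
-/

section TensorCancellation

variable {K : Type*} [Field K]

theorem TensorProduct.eq_zero_of_tmul_eq_zero_left {M N : Type*} [AddCommGroup M] [Module K M]
    [AddCommGroup N] [Module K N] {x : M} {y : N} (hx : x ≠ 0) (h : x ⊗ₜ[K] y = 0) : y = 0 := by
  obtain ⟨f, hf⟩ := Module.Projective.exists_dual_eq_one K hx
  simpa [hf] using congrArg (TensorProduct.lid K N ∘ LinearMap.rTensor N f) h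

theorem TensorProduct.eq_zero_of_tmul_eq_zero_right {M N : Type*} [AddCommGroup M] [Module K M]
    [AddCommGroup N] [Module K N] {x : M} {y : N} (hy : y ≠ 0) (h : x ⊗ₜ[K] y = 0) : x = 0 := by
  obtain ⟨f, hf⟩ := Module.Projective.exists_dual_eq_one K hy
  simpa [hf] using congrArg (TensorProduct.rid K M ∘ LinearMap.lTensor M f) h

variable {A : Type*} [Ring A] [Algebra K A]

theorem tmul_one_mul_mul_one_tmul_mem_map₂ (x y : A) (t : A ⊗[K] A) :
    (x ⊗ₜ[K] (1 : A)) * t * ((1 : A) ⊗ₜ[K] y) ∈ Submodule.map₂ (TensorProduct.mk K A A)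
      (LinearMap.range (LinearMap.mulLeft K x)) (LinearMap.range (LinearMap.mulRight K y)) := by
  induction t using TensorProduct.induction_on with
  | zero => simp
  | tmul a b =>
    simp only [Algebra.TensorProduct.tmul_mul_tmul, one_mul, mul_one]
    exact Submodule.apply_mem_map₂ _ ⟨a, rfl⟩ ⟨b, rfl⟩
  | add s t hs ht => simpa only [mul_add, add_mul] using add_mem hs ht

theorem mem_map₂_of_tmul_one_mul_eq_zero {e γ : A} {U W : Submodule K A} (hγe : γ * e = γ)
    (hγU : ∀ u ∈ U, γ * u = 0) (hγ : γ ≠ 0) {z : A ⊗[K] A}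
    (hz : z ∈ Submodule.map₂ (TensorProduct.mk K A A) (Submodule.span K {e} ⊔ U) W)
    (hγz : (γ ⊗ₜ[K] (1 : A)) * z = 0) :
    z ∈ Submodule.map₂ (TensorProduct.mk K A A) U W := by
  rw [Submodule.map₂_sup_left, Submodule.map₂_span_singleton_eq_map] at hz
  obtain ⟨_, ⟨y, hy, rfl⟩, t, ht, rfl⟩ := Submodule.mem_sup.1 hz
  have hγt : (γ ⊗ₜ[K] (1 : A)) * t = 0 := by
    have : t ∈ LinearMap.ker (LinearMap.mulLeft K (γ ⊗ₜ[K] (1 : A))) :=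
      Submodule.map₂_le.2 (fun u hu w _ => by simp [hγU u hu]) ht
    simpa using this
  have hy0 : y = 0 := by
    refine TensorProduct.eq_zero_of_tmul_eq_zero_left (K := K) hγ ?_
    simpa [mul_add, hγt, Algebra.TensorProduct.tmul_mul_tmul, hγe] using hγz
  simpa [hy0] using ht

theorem mem_map₂_of_mul_one_tmul_eq_zero {e β : A} {U W : Submodule K A} (heβ : e * β = β)
    (hWβ : ∀ w ∈ W, w * β = 0) (hβ : β ≠ 0) {z : A ⊗[K] A}
    (hz : z ∈ Submodule.map₂ (TensorProduct.mk K A A) U (Submodule.span K {e} ⊔ W))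
    (hzβ : z * ((1 : A) ⊗ₜ[K] β) = 0) :
    z ∈ Submodule.map₂ (TensorProduct.mk K A A) U W := by
  rw [Submodule.map₂_sup_right, Submodule.map₂_span_singleton_eq_map_flip] at hz
  obtain ⟨_, ⟨x, hx, rfl⟩, t, ht, rfl⟩ := Submodule.mem_sup.1 hz
  have htβ : t * ((1 : A) ⊗ₜ[K] β) = 0 := by
    have : t ∈ LinearMap.ker (LinearMap.mulRight K ((1 : A) ⊗ₜ[K] β)) :=
      Submodule.map₂_le.2 (fun u _ w hw => by simp [hWβ w hw]) ht
    simpa using this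
  have hx0 : x = 0 := by
    refine TensorProduct.eq_zero_of_tmul_eq_zero_right (K := K) hβ ?_
    simpa [add_mul, htβ, Algebra.TensorProduct.tmul_mul_tmul, heβ] using hzβ
  simpa [hx0] using ht

end TensorCancellation

namespace CTA

section QuiverCombinatorics

variable {V : Type} {Arr : V → V → Prop}

theorem target_eq_of_neighborSet_subset (hasymm : ∀ a b, Arr a b → ¬ Arr b a) {u v y : V}
    (hN : (graph V Arr).neighborSet u ⊆ insert y {w | Arr w u}) (h : Arr u v) : v = y := by
  have hv : v ∈ (graph V Arr).neighborSet u :=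
    (SimpleGraph.fromRel_adj _ _ _).2 ⟨fun huv => hasymm u v h (huv ▸ h), Or.inl h⟩
  rcases hN hv with hvy | hvu
  · exact hvy
  · exact absurd hvu (hasymm u v h)

theorem source_eq_of_neighborSet_subset (hasymm : ∀ a b, Arr a b → ¬ Arr b a) {u w y : V}
    (hN : (graph V Arr).neighborSet u ⊆ insert y {v | Arr u v}) (h : Arr w u) : w = y := by
  have hw : w ∈ (graph V Arr).neighborSet u :=
    (SimpleGraph.fromRel_adj _ _ _).2 ⟨fun huw => hasymm w u h (huw ▸ h), Or.inr h⟩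
  rcases hN hw with hwy | huw
  · exact hwy
  · exact absurd huw (hasymm w u h)

theorem neighborSet_eq_pair_of_valency_eq_two [Finite V] {u x y : V} (hval : valency V Arr u = 2)
    (hx : x ∈ (graph V Arr).neighborSet u) (hy : y ∈ (graph V Arr).neighborSet u) (hxy : x ≠ y) :
    (graph V Arr).neighborSet u = {x, y} :=
  (Set.eq_of_subset_of_ncard_le (Set.pair_subset hx hy)
    (by rw [Set.ncard_pair hxy, ← hval]; rfl) (Set.toFinite _)).symm

end QuiverCombinatorics

def Pth.append {V : Type} {Arr : V → V → Prop} {u v w : V} :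
    Pth Arr u v → Pth Arr v w → Pth Arr u w
  | .nil _, q => q
  | .cons h p, q => .cons h (p.append q)

section PathAlgebra

variable {k : Type} [Field k] {V : Type} [Fintype V] [DecidableEq V] {Arr : V → V → Prop}
  {R : Set (Gen k V Arr)}

theorem e_mul_e (u v : V) :
    e k V Arr R u * e k V Arr R v = if u = v then e k V Arr R u else 0 := by
  have h := RingQuot.mkAlgHom_rel k (BoundRel.quiver (R := R) (QuiverRel.idem u v))
  rw [map_mul, apply_ite (RingQuot.mkAlgHom k _), map_zero] at h
  exact h

theorem e_mul_e_self (v : V) : e k V Arr R v * e k V Arr R v = e k V Arr R v := by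
  rw [e_mul_e, if_pos rfl]

theorem sum_e : ∑ v : V, e k V Arr R v = 1 := by
  have h := RingQuot.mkAlgHom_rel k (BoundRel.quiver (R := R) (QuiverRel.unit (k := k)))
  rwa [map_sum, map_one] at h

theorem e_mul_arrEl (a : Edge V Arr) :
    e k V Arr R a.1.1 * arrEl k V Arr R a = arrEl k V Arr R a := by
  have h := RingQuot.mkAlgHom_rel k (BoundRel.quiver (R := R) (QuiverRel.src a))
  rwa [map_mul] at h

theorem arrEl_mul_e (a : Edge V Arr) :
    arrEl k V Arr R a * e k V Arr R a.1.2 = arrEl k V Arr R a := by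
  have h := RingQuot.mkAlgHom_rel k (BoundRel.quiver (R := R) (QuiverRel.tgt a))
  rwa [map_mul] at h

theorem e_mul_arrEl_of_ne {u : V} (a : Edge V Arr) (h : u ≠ a.1.1) :
    e k V Arr R u * arrEl k V Arr R a = 0 := by
  rw [← e_mul_arrEl a, ← mul_assoc, e_mul_e, if_neg h, zero_mul]

theorem arrEl_mul_e_of_ne {u : V} (a : Edge V Arr) (h : a.1.2 ≠ u) :
    arrEl k V Arr R a * e k V Arr R u = 0 := by
  rw [← arrEl_mul_e a, mul_assoc, e_mul_e, if_neg h, mul_zero]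

theorem arrEl_mul_arrEl_of_ne (a b : Edge V Arr) (h : a.1.2 ≠ b.1.1) :
    arrEl k V Arr R a * arrEl k V Arr R b = 0 := by
  rw [← e_mul_arrEl b, ← mul_assoc, arrEl_mul_e_of_ne a h, zero_mul]

theorem pathEl_nil (v : V) : pathEl k V Arr R (Pth.nil v) = e k V Arr R v := rfl

theorem pathEl_cons {u v w : V} (h : Arr u v) (p : Pth Arr v w) :
    pathEl k V Arr R (Pth.cons h p) = arrEl k V Arr R ⟨(u, v), h⟩ * pathEl k V Arr R p :=
  map_mul _ _ _

theorem arrEl_eq_pathEl {u v : V} (h : Arr u v) :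
    arrEl k V Arr R ⟨(u, v), h⟩ = pathEl k V Arr R (Pth.cons h (Pth.nil v)) := by
  rw [pathEl_cons, pathEl_nil, arrEl_mul_e ⟨(u, v), h⟩]

theorem e_mul_pathEl {u v : V} (p : Pth Arr u v) :
    e k V Arr R u * pathEl k V Arr R p = pathEl k V Arr R p := by
  cases p with
  | nil => exact e_mul_e_self u
  | cons h p => rw [pathEl_cons, ← mul_assoc, e_mul_arrEl ⟨(_, _), h⟩]

theorem e_mul_pathEl_of_ne {w u v : V} (p : Pth Arr u v) (h : w ≠ u) :
    e k V Arr R w * pathEl k V Arr R p = 0 := by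
  rw [← e_mul_pathEl p, ← mul_assoc, e_mul_e, if_neg h, zero_mul]

theorem pathEl_mul_e {u v : V} (p : Pth Arr u v) :
    pathEl k V Arr R p * e k V Arr R v = pathEl k V Arr R p := by
  induction p with
  | nil v => exact e_mul_e_self v
  | cons h p ih => rw [pathEl_cons, mul_assoc, ih]

theorem pathEl_mul_e_of_ne {u v w : V} (p : Pth Arr u v) (h : v ≠ w) :
    pathEl k V Arr R p * e k V Arr R w = 0 := by
  rw [← pathEl_mul_e p, mul_assoc, e_mul_e, if_neg h, mul_zero]

theorem pathEl_append {u v w : V} (p : Pth Arr u v) (q : Pth Arr v w) :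
    pathEl k V Arr R (p.append q) = pathEl k V Arr R p * pathEl k V Arr R q := by
  induction p with
  | nil v => exact (e_mul_pathEl q).symm
  | cons h p ih => rw [Pth.append, pathEl_cons, pathEl_cons, ih, mul_assoc]

variable (k Arr R) in
noncomputable def pathSpan : Submodule k (Alg k V Arr R) :=
  Submodule.span k (Set.range fun p : Σ u v : V, Pth Arr u v => pathEl k V Arr R p.2.2)

theorem pathEl_mem_pathSpan {u v : V} (p : Pth Arr u v) : pathEl k V Arr R p ∈ pathSpan k Arr R :=
  Submodule.subset_span ⟨⟨u, v, p⟩, rfl⟩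

theorem pathEl_mul_pathEl_mem_pathSpan {u v w x : V} (p : Pth Arr u v) (q : Pth Arr w x) :
    pathEl k V Arr R p * pathEl k V Arr R q ∈ pathSpan k Arr R := by
  by_cases hvw : v = w
  · subst hvw
    rw [← pathEl_append]
    exact pathEl_mem_pathSpan _
  · rw [← e_mul_pathEl q, ← mul_assoc, pathEl_mul_e_of_ne p hvw, zero_mul]
    exact zero_mem _

theorem pathSpan_eq_top : pathSpan k Arr R = ⊤ := by
  have hmul : ∀ x y, x ∈ pathSpan k Arr R → y ∈ pathSpan k Arr R → x * y ∈ pathSpan k Arr R := by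
    intro x y hx hy
    refine Submodule.mul_le.1 ?_ x hx y hy
    rw [pathSpan, Submodule.span_mul_span, Submodule.span_le]
    rintro _ ⟨_, ⟨p, rfl⟩, _, ⟨q, rfl⟩, rfl⟩
    exact pathEl_mul_pathEl_mem_pathSpan p.2.2 q.2.2
  have hone : (1 : Alg k V Arr R) ∈ pathSpan k Arr R := by
    rw [← sum_e]
    exact Submodule.sum_mem _ fun v _ => pathEl_mem_pathSpan (Pth.nil v)
  let T := (pathSpan k Arr R).toSubalgebra hone hmul
  suffices h : ∀ g, RingQuot.mkAlgHom k (BoundRel k V Arr R) g ∈ T by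
    refine eq_top_iff.2 fun x _ => ?_
    obtain ⟨g, rfl⟩ := RingQuot.mkAlgHom_surjective k _ x
    exact h g
  intro g
  induction g using FreeAlgebra.induction with
  | grade0 r => rw [AlgHom.commutes]; exact T.algebraMap_mem r
  | grade1 x =>
    cases x with
    | inl v => exact pathEl_mem_pathSpan (Pth.nil v)
    | inr a =>
      show arrEl k V Arr R ⟨(a.1.1, a.1.2), a.2⟩ ∈ pathSpan k Arr R
      rw [arrEl_eq_pathEl]
      exact pathEl_mem_pathSpan _
  | mul g₁ g₂ h₁ h₂ => rw [map_mul]; exact T.mul_mem h₁ h₂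
  | add g₁ g₂ h₁ h₂ => rw [map_add]; exact T.add_mem h₁ h₂

theorem map_mem_of_forall_pathEl {M : Type*} [AddCommGroup M] [Module k M]
    (f : Alg k V Arr R →ₗ[k] M) {S : Submodule k M}
    (hf : ∀ (u v : V) (p : Pth Arr u v), f (pathEl k V Arr R p) ∈ S) (x : Alg k V Arr R) :
    f x ∈ S := by
  have hle : pathSpan k Arr R ≤ S.comap f := by
    rw [pathSpan, Submodule.span_le]
    rintro _ ⟨⟨u, v, p⟩, rfl⟩
    exact hf u v p
  exact hle (pathSpan_eq_top (k := k) (Arr := Arr) (R := R) ▸ Submodule.mem_top)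

theorem e_mul_mem_span_sup {u v : V} (h : Arr u v) (hout : ∀ w, Arr u w → w = v)
    (x : Alg k V Arr R) :
    e k V Arr R u * x ∈ Submodule.span k {e k V Arr R u} ⊔
      LinearMap.range (LinearMap.mulLeft k (arrEl k V Arr R ⟨(u, v), h⟩)) := by
  refine map_mem_of_forall_pathEl (LinearMap.mulLeft k (e k V Arr R u)) (fun a b p => ?_) x
  rw [LinearMap.mulLeft_apply]
  by_cases hua : u = a
  · subst hua
    cases p with
    | nil =>
      rw [pathEl_nil, e_mul_e_self]
      exact Submodule.mem_sup_left (Submodule.mem_span_singleton_self _)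
    | cons h' p =>
      obtain rfl := hout _ h'
      rw [e_mul_pathEl, pathEl_cons]
      exact Submodule.mem_sup_right ⟨pathEl k V Arr R p, rfl⟩
  · rw [e_mul_pathEl_of_ne p hua]
    exact zero_mem _

theorem mul_e_mem_span_sup {u v : V} (h : Arr u v) (hin : ∀ w, Arr w v → w = u)
    (x : Alg k V Arr R) :
    x * e k V Arr R v ∈ Submodule.span k {e k V Arr R v} ⊔
      LinearMap.range (LinearMap.mulRight k (arrEl k V Arr R ⟨(u, v), h⟩)) := by
  set S := Submodule.span k {e k V Arr R v} ⊔
    LinearMap.range (LinearMap.mulRight k (arrEl k V Arr R ⟨(u, v), h⟩))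
  have harr : ∀ {a c : V} (h' : Arr a c), arrEl k V Arr R ⟨(a, c), h'⟩ * e k V Arr R v ∈ S := by
    intro a c h'
    by_cases hcv : c = v
    · subst hcv
      obtain rfl := hin _ h'
      refine Submodule.mem_sup_right ⟨1, ?_⟩
      rw [LinearMap.mulRight_apply, one_mul]
      exact (arrEl_mul_e ⟨(a, c), h'⟩).symm
    · rw [arrEl_mul_e_of_ne ⟨(a, c), h'⟩ hcv]
      exact zero_mem _
  refine map_mem_of_forall_pathEl (LinearMap.mulRight k (e k V Arr R v)) (fun a b p => ?_) x
  rw [LinearMap.mulRight_apply]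
  induction p with
  | nil b =>
    by_cases hbv : b = v
    · subst hbv
      rw [pathEl_nil, e_mul_e_self]
      exact Submodule.mem_sup_left (Submodule.mem_span_singleton_self _)
    · rw [pathEl_nil, e_mul_e, if_neg hbv]
      exact zero_mem _
  | cons h' p ih =>
    obtain ⟨_, hs, _, ⟨y, rfl⟩, hsum⟩ := Submodule.mem_sup.1 ih
    obtain ⟨r, rfl⟩ := Submodule.mem_span_singleton.1 hs
    rw [pathEl_cons, mul_assoc, ← hsum, mul_add, mul_smul_comm, LinearMap.mulRight_apply,
      ← mul_assoc]
    exact add_mem (S.smul_mem r (harr h')) (Submodule.mem_sup_right ⟨_, rfl⟩)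

theorem arrEl_mul_mem_span_pathEl {u v : V} (h : Arr u v) (x : Alg k V Arr R) :
    arrEl k V Arr R ⟨(u, v), h⟩ * x ∈ Submodule.span k
      {y | ∃ (w : V) (ρ : Pth Arr v w), y = arrEl k V Arr R ⟨(u, v), h⟩ * pathEl k V Arr R ρ} := by
  refine map_mem_of_forall_pathEl (LinearMap.mulLeft k _) (fun a b p => ?_) x
  by_cases hva : v = a
  · subst hva
    exact Submodule.subset_span ⟨b, p, rfl⟩
  · rw [LinearMap.mulLeft_apply, ← e_mul_pathEl p, ← mul_assoc,
      arrEl_mul_e_of_ne ⟨(u, v), h⟩ hva, zero_mul]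
    exact zero_mem _

theorem mul_arrEl_mem_span_pathEl {u v : V} (h : Arr u v) (x : Alg k V Arr R) :
    x * arrEl k V Arr R ⟨(u, v), h⟩ ∈ Submodule.span k
      {y | ∃ (w : V) (μ : Pth Arr w u), y = pathEl k V Arr R μ * arrEl k V Arr R ⟨(u, v), h⟩} := by
  refine map_mem_of_forall_pathEl (LinearMap.mulRight k _) (fun a b p => ?_) x
  by_cases hbu : b = u
  · subst hbu
    exact Submodule.subset_span ⟨a, p, rfl⟩
  · rw [LinearMap.mulRight_apply, ← e_mul_arrEl ⟨(u, v), h⟩, ← mul_assoc,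
      pathEl_mul_e_of_ne p hbu, zero_mul]
    exact zero_mem _

theorem arrEl_mul_mem_span_singleton {u v : V} (h : Arr u v)
    (hzero : ∀ w (h' : Arr v w),
      arrEl k V Arr R ⟨(u, v), h⟩ * arrEl k V Arr R ⟨(v, w), h'⟩ = 0)
    (x : Alg k V Arr R) :
    arrEl k V Arr R ⟨(u, v), h⟩ * x ∈ Submodule.span k {arrEl k V Arr R ⟨(u, v), h⟩} := by
  refine map_mem_of_forall_pathEl (LinearMap.mulLeft k _) (fun a b p => ?_) x
  rw [LinearMap.mulLeft_apply]
  cases p with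
  | nil a =>
    by_cases hva : v = a
    · subst hva
      rw [pathEl_nil, arrEl_mul_e ⟨(u, v), h⟩]
      exact Submodule.mem_span_singleton_self _
    · rw [pathEl_nil, arrEl_mul_e_of_ne ⟨(u, v), h⟩ hva]
      exact zero_mem _
  | cons h' p =>
    rw [pathEl_cons, ← mul_assoc]
    by_cases hva : v = a
    · subst hva
      rw [hzero _ h', zero_mul]
      exact zero_mem _
    · rw [arrEl_mul_arrEl_of_ne ⟨(u, v), h⟩ ⟨(a, _), h'⟩ hva, zero_mul]
      exact zero_mem _

theorem mul_arrEl_mem_span_singleton {u v : V} (h : Arr u v)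
    (hzero : ∀ w (h' : Arr w u),
      arrEl k V Arr R ⟨(w, u), h'⟩ * arrEl k V Arr R ⟨(u, v), h⟩ = 0)
    (x : Alg k V Arr R) :
    x * arrEl k V Arr R ⟨(u, v), h⟩ ∈ Submodule.span k {arrEl k V Arr R ⟨(u, v), h⟩} := by
  refine map_mem_of_forall_pathEl (LinearMap.mulRight k _) (fun a b p => ?_) x
  rw [LinearMap.mulRight_apply]
  induction p with
  | nil b =>
    by_cases hbu : b = u
    · subst hbu
      rw [pathEl_nil, e_mul_arrEl ⟨(b, v), h⟩]
      exact Submodule.mem_span_singleton_self _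
    · rw [pathEl_nil, e_mul_arrEl_of_ne ⟨(u, v), h⟩ hbu]
      exact zero_mem _
  | @cons a c _ h' p ih =>
    obtain ⟨r, hr⟩ := Submodule.mem_span_singleton.1 ih
    have hzero' : arrEl k V Arr R ⟨(a, c), h'⟩ * arrEl k V Arr R ⟨(u, v), h⟩ = 0 := by
      by_cases hcu : c = u
      · subst hcu
        exact hzero a h'
      · exact arrEl_mul_arrEl_of_ne ⟨(a, c), h'⟩ ⟨(u, v), h⟩ hcu
    rw [pathEl_cons, mul_assoc, ← hr, mul_smul_comm, hzero', smul_zero]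
    exact zero_mem _

theorem map₂_range_mul_le_span_pathEl {a b c d : V} (hβ : Arr a b) (hγ : Arr c d) :
    Submodule.map₂ (TensorProduct.mk k _ _)
      (LinearMap.range (LinearMap.mulLeft k (arrEl k V Arr R ⟨(a, b), hβ⟩)))
      (LinearMap.range (LinearMap.mulRight k (arrEl k V Arr R ⟨(c, d), hγ⟩))) ≤
    Submodule.span k {z | ∃ (u w : V) (ρ : Pth Arr b u) (μ : Pth Arr w c),
      z = (arrEl k V Arr R ⟨(a, b), hβ⟩ * pathEl k V Arr R ρ) ⊗ₜ[k]
        (pathEl k V Arr R μ * arrEl k V Arr R ⟨(c, d), hγ⟩)} := by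
  refine Submodule.map₂_le.2 ?_
  rintro _ ⟨x, rfl⟩ _ ⟨y, rfl⟩
  have h := Submodule.apply_mem_map₂ (TensorProduct.mk k _ _)
    (arrEl_mul_mem_span_pathEl hβ x) (mul_arrEl_mem_span_pathEl hγ y)
  rw [Submodule.map₂_span_span] at h
  refine Submodule.span_mono ?_ h
  rintro _ ⟨_, ⟨u, ρ, rfl⟩, _, ⟨w, μ, rfl⟩, rfl⟩
  exact ⟨u, w, ρ, μ, rfl⟩

theorem map₂_range_mul_le_span_tmul {a b c d : V} (hβ : Arr a b) (hγ : Arr c d)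
    (hβz : ∀ w (h : Arr b w),
      arrEl k V Arr R ⟨(a, b), hβ⟩ * arrEl k V Arr R ⟨(b, w), h⟩ = 0)
    (hγz : ∀ w (h : Arr w c),
      arrEl k V Arr R ⟨(w, c), h⟩ * arrEl k V Arr R ⟨(c, d), hγ⟩ = 0) :
    Submodule.map₂ (TensorProduct.mk k _ _)
      (LinearMap.range (LinearMap.mulLeft k (arrEl k V Arr R ⟨(a, b), hβ⟩)))
      (LinearMap.range (LinearMap.mulRight k (arrEl k V Arr R ⟨(c, d), hγ⟩))) ≤
    Submodule.span k
      {arrEl k V Arr R ⟨(a, b), hβ⟩ ⊗ₜ[k] arrEl k V Arr R ⟨(c, d), hγ⟩} := by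
  refine Submodule.map₂_le.2 ?_
  rintro _ ⟨x, rfl⟩ _ ⟨y, rfl⟩
  simpa [Submodule.map₂_span_span] using Submodule.apply_mem_map₂ (TensorProduct.mk k _ _)
    (arrEl_mul_mem_span_singleton hβ hβz x) (mul_arrEl_mem_span_singleton hγ hγz y)

theorem apply_e_mem_map₂_range_mul {i i1 d : V} (hγ : Arr i1 d)
    (hβ : Arr d i) (hout : ∀ w, Arr d w → w = i) (hin : ∀ w, Arr w d → w = i1)
    (hγβ : arrEl k V Arr R ⟨(i1, d), hγ⟩ * arrEl k V Arr R ⟨(d, i), hβ⟩ = 0)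
    (hβ0 : arrEl k V Arr R ⟨(d, i), hβ⟩ ≠ 0) (hγ0 : arrEl k V Arr R ⟨(i1, d), hγ⟩ ≠ 0)
    {Δ : Alg k V Arr R →ₗ[k] Alg k V Arr R ⊗[k] Alg k V Arr R}
    (hΔ : IsOpenFrobenius k (Alg k V Arr R) Δ)
    (hΔβ : Δ (arrEl k V Arr R ⟨(d, i), hβ⟩) = 0) (hΔγ : Δ (arrEl k V Arr R ⟨(i1, d), hγ⟩) = 0) :
    Δ (e k V Arr R d) ∈ Submodule.map₂ (TensorProduct.mk k _ _)
      (LinearMap.range (LinearMap.mulLeft k (arrEl k V Arr R ⟨(d, i), hβ⟩)))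
      (LinearMap.range (LinearMap.mulRight k (arrEl k V Arr R ⟨(i1, d), hγ⟩))) := by
  set β := arrEl k V Arr R ⟨(d, i), hβ⟩
  set γ := arrEl k V Arr R ⟨(i1, d), hγ⟩
  set e := e k V Arr R d
  have hΔe : Δ e = (e ⊗ₜ[k] 1) * Δ e * (1 ⊗ₜ[k] e) := by
    rw [← (hΔ e e).1, e_mul_e_self, ← (hΔ e e).2, e_mul_e_self]
  have hΔe_mem : Δ e ∈ Submodule.map₂ (TensorProduct.mk k _ _)
      (Submodule.span k {e} ⊔ LinearMap.range (LinearMap.mulLeft k β))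
      (Submodule.span k {e} ⊔ LinearMap.range (LinearMap.mulRight k γ)) := by
    rw [hΔe]
    refine Submodule.map₂_le_map₂ ?_ ?_ (tmul_one_mul_mul_one_tmul_mem_map₂ e e (Δ e))
    · rintro _ ⟨x, rfl⟩
      exact e_mul_mem_span_sup hβ hout x
    · rintro _ ⟨x, rfl⟩
      exact mul_e_mem_span_sup hγ hin x
  refine mem_map₂_of_mul_one_tmul_eq_zero (e_mul_arrEl ⟨(d, i), hβ⟩) ?_ hβ0
    (mem_map₂_of_tmul_one_mul_eq_zero (arrEl_mul_e ⟨(i1, d), hγ⟩) ?_ hγ0 hΔe_mem ?_) ?_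
  · rintro _ ⟨x, rfl⟩
    rw [LinearMap.mulRight_apply, mul_assoc, hγβ, mul_zero]
  · rintro _ ⟨x, rfl⟩
    rw [LinearMap.mulLeft_apply, ← mul_assoc, hγβ, zero_mul]
  · rw [← (hΔ γ e).1, arrEl_mul_e ⟨(i1, d), hγ⟩, hΔγ]
  · rw [← (hΔ e β).2, e_mul_arrEl ⟨(d, i), hβ⟩, hΔβ]

end PathAlgebra

section Saturated

variable {k : Type} [Field k] {V : Type} [Fintype V] [DecidableEq V] {Arr : V → V → Prop}

theorem arrEl_mul_arrEl_eq_zero {u v w : V} (h₁ : Arr u v) (h₂ : Arr v w) (h₃ : Arr w u) :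
    arrEl k V Arr (satSet k V Arr) ⟨(u, v), h₁⟩ * arrEl k V Arr (satSet k V Arr) ⟨(v, w), h₂⟩ =
      0 := by
  have h := RingQuot.mkAlgHom_rel k
    (BoundRel.rel ⟨u, v, w, h₁, h₂, h₃, rfl⟩ : BoundRel k V Arr (satSet k V Arr) _ 0)
  rwa [map_mul, map_zero] at h

/-- A representation with `a ↦ E₀₁ ≠ 0` that kills every product of two arrows, hence `satSet`. -/
noncomputable def arrowRep (a : Edge V Arr) : Gen k V Arr →ₐ[k] Matrix (Fin 2) (Fin 2) k :=
  FreeAlgebra.lift k <| Sum.elim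
    (fun x => (if x = a.1.1 then Matrix.single 0 0 1 else 0) +
      (if x = a.1.2 then Matrix.single 1 1 1 else 0))
    (fun b => if b = a then Matrix.single 0 1 1 else 0)

theorem arrowRep_rel (a : Edge V Arr) {x y : Gen k V Arr}
    (hxy : BoundRel k V Arr (satSet k V Arr) x y) : arrowRep a x = arrowRep a y := by
  have hV : ∀ x, arrowRep (k := k) a (genV k x) = (if x = a.1.1 then Matrix.single 0 0 1 else 0) +
      (if x = a.1.2 then Matrix.single 1 1 1 else 0) := fun x => FreeAlgebra.lift_ι_apply _ _
  have hE : ∀ b, arrowRep (k := k) a (genE k b) = if b = a then Matrix.single 0 1 1 else 0 :=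
    fun b => FreeAlgebra.lift_ι_apply _ _
  rcases hxy with ⟨hq⟩ | ⟨⟨u, v, w, h₁, h₂, h₃, rfl⟩⟩
  · rcases hq with ⟨u, v⟩ | _ | ⟨b⟩ | ⟨b⟩
    · rw [map_mul, apply_ite (arrowRep a), map_zero, hV, hV]
      split_ifs <;>
        simp_all [add_mul, mul_add, Matrix.single_mul_single_same, Matrix.single_mul_single_of_ne]
    · simp only [map_sum, hV, Finset.sum_add_distrib, Finset.sum_ite_eq', Finset.mem_univ,
        if_true, map_one]
      ext i j
      fin_cases i <;> fin_cases j <;> simp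
    · rw [map_mul, hV, hE]
      split_ifs <;>
        simp_all [add_mul, Matrix.single_mul_single_same, Matrix.single_mul_single_of_ne]
    · rw [map_mul, hV, hE]
      split_ifs <;>
        simp_all [mul_add, Matrix.single_mul_single_same, Matrix.single_mul_single_of_ne]
  · rw [map_mul, hE, hE, map_zero]
    split_ifs <;> simp_all [Matrix.single_mul_single_of_ne]

theorem arrEl_ne_zero (a : Edge V Arr) :
    arrEl k V Arr (satSet k V Arr) a ≠ 0 := by
  intro h0
  have h := congrArg (RingQuot.liftAlgHom k ⟨arrowRep a, fun _ _ => arrowRep_rel a⟩) h0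
  rw [arrEl, RingQuot.liftAlgHom_mkAlgHom_apply, map_zero, arrowRep, genE,
    FreeAlgebra.lift_ι_apply] at h
  simpa using congrFun (congrFun h 0) 1

end Saturated

end CTA

open CTA in
/-- In a cluster-tilted algebra of type `𝔸` whose quiver contains a saturated oriented
3-cycle `i → i+1 → d₁ → i` with `d₁` of valency two, every open Frobenius structure `Δ`
with `Δ(β) = Δ(γ) = 0` satisfies `Δ(e_{d₁}) = ∑ A_{ρμ} (βρ) ⊗ (μγ)`, the sum ranging over
paths `ρ` with source `i` and paths `μ` with target `i+1`.  If moreover the only other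
arrows at `i` and `i+1` are `i−1 → i` and `i+1 → i+2`, then `Δ(e_{d₁}) = A • (β ⊗ γ)`. -/
theorem frob_at_valency_two_cycle_vertex (k : Type) [Field k] (V : Type) [Fintype V]
    [DecidableEq V] (Arr : V → V → Prop) (hQ : IsTypeA Arr)
    (i i1 d1 : V) (hα : Arr i i1) (hγ : Arr i1 d1) (hβ : Arr d1 i)
    (hval : valency V Arr d1 = 2) :
    ∀ Δ : ctAlg k V Arr →ₗ[k] ctAlg k V Arr ⊗[k] ctAlg k V Arr,
      Δ ∈ FrobSpace k (ctAlg k V Arr) →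
      Δ (arrEl k V Arr (satSet k V Arr) ⟨(d1, i), hβ⟩) = 0 →
      Δ (arrEl k V Arr (satSet k V Arr) ⟨(i1, d1), hγ⟩) = 0 →
      (Δ (e k V Arr (satSet k V Arr) d1) ∈ Submodule.span k
        {z : ctAlg k V Arr ⊗[k] ctAlg k V Arr |
          ∃ (u w : V) (ρ : Pth Arr i u) (μ : Pth Arr w i1),
            z = (arrEl k V Arr (satSet k V Arr) ⟨(d1, i), hβ⟩ *
                  pathEl k V Arr (satSet k V Arr) ρ) ⊗ₜ[k]
                (pathEl k V Arr (satSet k V Arr) μ *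
                  arrEl k V Arr (satSet k V Arr) ⟨(i1, d1), hγ⟩)}) ∧
      (∀ im1 ip2 : V, Arr im1 i → Arr i1 ip2 →
        (graph V Arr).neighborSet i = {im1, i1, d1} →
        (graph V Arr).neighborSet i1 = {i, ip2, d1} →
        ∃ A : k, Δ (e k V Arr (satSet k V Arr) d1) =
          A • (arrEl k V Arr (satSet k V Arr) ⟨(d1, i), hβ⟩ ⊗ₜ[k]
               arrEl k V Arr (satSet k V Arr) ⟨(i1, d1), hγ⟩)) := by
  intro Δ hΔ hΔβ hΔγ
  have hasymm := hQ.1.no_two_cycle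
  have hne : ∀ {a b : V}, Arr a b → a ≠ b := fun h hab => hasymm _ _ h (hab ▸ h)
  have hNd : (graph V Arr).neighborSet d1 = {i, i1} :=
    neighborSet_eq_pair_of_valency_eq_two hval ((SimpleGraph.fromRel_adj _ _ _).2 ⟨hne hβ, .inl hβ⟩)
      ((SimpleGraph.fromRel_adj _ _ _).2 ⟨(hne hγ).symm, .inr hγ⟩) (hne hα)
  have hmem := apply_e_mem_map₂_range_mul hγ hβ
    (fun _ => target_eq_of_neighborSet_subset hasymm <| by
      rw [hNd]; simp [Set.insert_subset_iff, hγ])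
    (fun _ => source_eq_of_neighborSet_subset hasymm <| by
      rw [hNd]; simp [Set.insert_subset_iff, hβ])
    (arrEl_mul_arrEl_eq_zero hγ hβ hα) (arrEl_ne_zero _) (arrEl_ne_zero _) hΔ hΔβ hΔγ
  refine ⟨map₂_range_mul_le_span_pathEl hβ hγ hmem, fun im1 ip2 him1 hip2 hNi hNi1 => ?_⟩
  have hβz : ∀ w (h : Arr i w), arrEl k V Arr (satSet k V Arr) ⟨(d1, i), hβ⟩ *
      arrEl k V Arr (satSet k V Arr) ⟨(i, w), h⟩ = 0 := fun w h => by
    obtain rfl : w = i1 := target_eq_of_neighborSet_subset hasymm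
      (by rw [hNi]; simp [Set.insert_subset_iff, him1, hβ]) h
    exact arrEl_mul_arrEl_eq_zero hβ hα hγ
  have hγz : ∀ w (h : Arr w i1), arrEl k V Arr (satSet k V Arr) ⟨(w, i1), h⟩ *
      arrEl k V Arr (satSet k V Arr) ⟨(i1, d1), hγ⟩ = 0 := fun w h => by
    obtain rfl : w = i := source_eq_of_neighborSet_subset hasymm
      (by rw [hNi1]; simp [Set.insert_subset_iff, hip2, hγ]) h
    exact arrEl_mul_arrEl_eq_zero hα hγ hβ
  obtain ⟨A, hA⟩ := Submodule.mem_span_singleton.1 (map₂_range_mul_le_span_tmul hβ hγ hβz hγz hmem)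
  exact ⟨A, hA.symm⟩
end
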